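/- arXiv:1903.00324 — 8 statements merged into one kernel-verified Lean document; each statement's English description precedes it below -/
import Mathlib

section
/- Let E be a complex vector space, F a separating subspace of the conjugate algebraic dual of E, H₁ and H₂ complex Hilbert spaces, and T₁ : H₁ → F, T₂ : H₂ → F weakly continuous linear operators with adjoints T₁* : E → H₁, T₂* : E → H₂. If there exists a constant α ≥ 0 such that ‖T₁* x‖² ≤ α ‖T₂* x‖² for all x ∈ E, then there exists a bounded linear operator D : H₁ → H₂ such that T₁ = T₂ ∘ D and ‖D‖² ≤ α. -/
/-!
Douglas' factorization argument. The bound `‖T₁* x‖ ≤ √α ‖T₂* x‖` makes `T₂* x ↦ T₁* x` a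
well-defined linear map of norm at most `√α` on the range of `T₂*`; it extends by continuity to the
closure of that range and, through the orthogonal projection onto the closure, to an operator
`C : H₂ → H₁` of the same norm with `C T₂* = T₁*`. Then `D := C*` works: for every `x`,
`⟨T₁ h - T₂ (C* h), x⟩ = ⟪T₁* x - C T₂* x, h⟫ = 0`, so `T₁ h = T₂ (D h)` since the pairing
separates the points of `F`, and `‖D‖ = ‖C‖ ≤ √α`.
-/

theorem LinearMap.denseRange_codRestrict_topologicalClosure {𝕜 E H : Type*} [Semiring 𝕜]
    [AddCommMonoid E] [Module 𝕜 E] [AddCommMonoid H] [Module 𝕜 H] [TopologicalSpace H]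
    [ContinuousAdd H] [ContinuousConstSMul 𝕜 H] (A : E →ₗ[𝕜] H) :
    DenseRange (A.codRestrict (LinearMap.range A).topologicalClosure
      fun x ↦ (LinearMap.range A).le_topologicalClosure (LinearMap.mem_range_self A x)) := by
  rw [DenseRange, Subtype.dense_iff, ← Set.range_comp]
  exact subset_rfl

theorem exists_continuousLinearMap_comp_eq_of_norm_le {𝕜 E F H : Type*} [RCLike 𝕜]
    [AddCommGroup E] [Module 𝕜 E] [NormedAddCommGroup F] [NormedSpace 𝕜 F] [CompleteSpace F]
    [NormedAddCommGroup H] [InnerProductSpace 𝕜 H] [CompleteSpace H]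
    (A : E →ₗ[𝕜] H) (B : E →ₗ[𝕜] F) {c : ℝ} (hc : 0 ≤ c) (hBA : ∀ x, ‖B x‖ ≤ c * ‖A x‖) :
    ∃ C : H →L[𝕜] F, (∀ x, C (A x) = B x) ∧ ‖C‖ ≤ c := by
  set K := (LinearMap.range A).topologicalClosure
  let A' : E →ₗ[𝕜] K := A.codRestrict K
    fun x ↦ (LinearMap.range A).le_topologicalClosure (LinearMap.mem_range_self A x)
  have hA' : DenseRange A' := A.denseRange_codRestrict_topologicalClosure
  let P := K.orthogonalProjectionOnto
  refine ⟨(B.extendOfNorm A').comp P, fun x ↦ ?_, ?_⟩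
  · have hPA : P (A x) = A' x := K.orthogonalProjectionOnto_mem_subspace_eq_self (A' x)
    rw [ContinuousLinearMap.comp_apply, hPA, LinearMap.extendOfNorm_eq hA' ⟨c, hBA⟩]
  · calc ‖(B.extendOfNorm A').comp P‖ ≤ ‖B.extendOfNorm A'‖ * ‖P‖ :=
          ContinuousLinearMap.opNorm_comp_le _ _
      _ ≤ c * 1 := by
        gcongr
        exacts [LinearMap.opNorm_extendOfNorm_le hA' hc hBA, K.orthogonalProjectionOnto_norm_le]
      _ = c := mul_one c

theorem stmt_0_general
    {E F : Type*} [AddCommGroup E] [Module ℂ E] [AddCommGroup F] [Module ℂ F]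
    (p : F →ₗ[ℂ] E →ₗ⋆[ℂ] ℂ)
    (hsepF : ∀ f : F, (∀ x : E, p f x = 0) → f = 0)
    {H₁ H₂ : Type*} [NormedAddCommGroup H₁] [InnerProductSpace ℂ H₁] [CompleteSpace H₁]
    [NormedAddCommGroup H₂] [InnerProductSpace ℂ H₂] [CompleteSpace H₂]
    (T₁ : H₁ →ₗ[ℂ] F) (T₂ : H₂ →ₗ[ℂ] F)
    (T₁adj : E →ₗ[ℂ] H₁) (T₂adj : E →ₗ[ℂ] H₂)
    (hadj₁ : ∀ (h : H₁) (x : E), p (T₁ h) x = @inner ℂ _ _ (T₁adj x) h)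
    (hadj₂ : ∀ (h : H₂) (x : E), p (T₂ h) x = @inner ℂ _ _ (T₂adj x) h)
    (α : ℝ) (hα : 0 ≤ α)
    (hdom : ∀ x : E, ‖T₁adj x‖ ^ 2 ≤ α * ‖T₂adj x‖ ^ 2) :
    ∃ D : H₁ →L[ℂ] H₂, (∀ h : H₁, T₁ h = T₂ (D h)) ∧ ‖D‖ ^ 2 ≤ α := by
  have hbound : ∀ x, ‖T₁adj x‖ ≤ √α * ‖T₂adj x‖ := fun x ↦ by
    rw [← Real.sqrt_sq (norm_nonneg (T₁adj x)), ← Real.sqrt_sq (norm_nonneg (T₂adj x)),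
      ← Real.sqrt_mul hα]
    exact Real.sqrt_le_sqrt (hdom x)
  obtain ⟨C, hC, hCnorm⟩ :=
    exists_continuousLinearMap_comp_eq_of_norm_le T₂adj T₁adj (Real.sqrt_nonneg α) hbound
  refine ⟨C.adjoint, fun h ↦ sub_eq_zero.mp (hsepF _ fun x ↦ ?_), ?_⟩
  · rw [map_sub, LinearMap.sub_apply, hadj₁, hadj₂, ContinuousLinearMap.adjoint_inner_right, hC,
      sub_self]
  · rw [LinearIsometryEquiv.norm_map]
    exact (Real.le_sqrt (norm_nonneg C) hα).mp hCnorm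

/-- **Douglas-type factorization for anti-dual pairs** (Theorem 2.1, (ii) ⇒ (iv) with norm bound).
`p` is the anti-duality pairing of the anti-dual pair ⟨F, E⟩ (linear in the `F`-variable and
conjugate-linear in the `E`-variable), assumed to separate the points of `E` and of `F`.
`T₁ : H₁ → F`, `T₂ : H₂ → F` are weakly continuous linear operators, encoded together with
their adjoints `T₁adj : E → H₁`, `T₂adj : E → H₂` via the defining identity
`⟨Tⱼ h, x⟩ = ⟪Tⱼ* x, h⟫`. If `‖T₁* x‖² ≤ α ‖T₂* x‖²` for all `x`, then `T₁` factors as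
`T₁ = T₂ ∘ D` with a bounded operator `D` satisfying `‖D‖² ≤ α`. -/
theorem stmt_0
    {E F : Type*} [AddCommGroup E] [Module ℂ E] [AddCommGroup F] [Module ℂ F]
    (p : F →ₗ[ℂ] E →ₗ⋆[ℂ] ℂ)
    (hsepE : ∀ x : E, (∀ f : F, p f x = 0) → x = 0)
    (hsepF : ∀ f : F, (∀ x : E, p f x = 0) → f = 0)
    {H₁ H₂ : Type*} [NormedAddCommGroup H₁] [InnerProductSpace ℂ H₁] [CompleteSpace H₁]
    [NormedAddCommGroup H₂] [InnerProductSpace ℂ H₂] [CompleteSpace H₂]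
    (T₁ : H₁ →ₗ[ℂ] F) (T₂ : H₂ →ₗ[ℂ] F)
    (T₁adj : E →ₗ[ℂ] H₁) (T₂adj : E →ₗ[ℂ] H₂)
    (hadj₁ : ∀ (h : H₁) (x : E), p (T₁ h) x = @inner ℂ _ _ (T₁adj x) h)
    (hadj₂ : ∀ (h : H₂) (x : E), p (T₂ h) x = @inner ℂ _ _ (T₂adj x) h)
    (α : ℝ) (hα : 0 ≤ α)
    (hdom : ∀ x : E, ‖T₁adj x‖ ^ 2 ≤ α * ‖T₂adj x‖ ^ 2) :
    ∃ D : H₁ →L[ℂ] H₂, (∀ h : H₁, T₁ h = T₂ (D h)) ∧ ‖D‖ ^ 2 ≤ α :=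
  stmt_0_general p hsepF T₁ T₂ T₁adj T₂adj hadj₁ hadj₂ α hα hdom
end

section
/- Let E be a complex vector space, F a separating subspace of the conjugate algebraic dual of E, H a Hilbert space, and T : E → H a weakly continuous linear operator. A vector y ∈ F belongs to the range of the adjoint T* : H → F if and only if there exists a constant m ≥ 0 such that |⟨y, x⟩|² ≤ m ‖Tx‖² for all x ∈ E. -/
/-!
The bound makes `x ↦ conj ⟨y, x⟩` vanish on `ker T`, so it factors through `T` as a functional
on `range T` bounded by `√m`. Hahn–Banach extends it to all of `H` and the Riesz representation
turns it into `h ↦ ⟪h, ·⟫`, so that `⟨y, x⟩ = ⟪T x, h⟫ = ⟨T* h, x⟩` for all `x`; separation gives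
`y = T* h`. The converse is Cauchy–Schwarz.
-/

open scoped InnerProductSpace

theorem LinearMap.exists_comp_rangeRestrict_eq_of_ker_le {R M M₂ M₃ : Type*} [Ring R]
    [AddCommGroup M] [Module R M] [AddCommGroup M₂] [Module R M₂] [AddCommGroup M₃] [Module R M₃]
    (T : M →ₗ[R] M₂) (f : M →ₗ[R] M₃) (hker : LinearMap.ker T ≤ LinearMap.ker f) :
    ∃ g : LinearMap.range T →ₗ[R] M₃, g ∘ₗ T.rangeRestrict = f := by
  refine ⟨(LinearMap.ker T).liftQ f hker ∘ₗ T.quotKerEquivRange.symm.toLinearMap, ?_⟩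
  ext x
  change (LinearMap.ker T).liftQ f hker
    (T.quotKerEquivRange.symm ⟨T x, LinearMap.mem_range_self T x⟩) = f x
  rw [T.quotKerEquivRange_symm_apply_image]
  rfl

theorem exists_eq_inner_of_norm_le_mul_norm {𝕜 E H : Type*} [RCLike 𝕜]
    [AddCommGroup E] [Module 𝕜 E] [NormedAddCommGroup H] [InnerProductSpace 𝕜 H] [CompleteSpace H]
    (T : E →ₗ[𝕜] H) (f : E →ₗ⋆[𝕜] 𝕜) (C : ℝ) (hf : ∀ x, ‖f x‖ ≤ C * ‖T x‖) :
    ∃ h : H, ∀ x, f x = ⟪T x, h⟫_𝕜 := by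
  let f' : E →ₗ[𝕜] 𝕜 := (starLinearEquiv 𝕜 (A := 𝕜)).toLinearMap.comp f
  have hf' : ∀ x, ‖f' x‖ ≤ C * ‖T x‖ := fun x => by simpa [f'] using hf x
  have hker : LinearMap.ker T ≤ LinearMap.ker f' := fun x hx => by
    simpa [show T x = 0 from hx] using hf' x
  obtain ⟨g, hg⟩ := T.exists_comp_rangeRestrict_eq_of_ker_le f' hker
  have hgT : ∀ x, g (T.rangeRestrict x) = f' x := fun x => congr($hg x)
  have hg_bound : ∀ v, ‖g v‖ ≤ C * ‖v‖ := by
    intro v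
    obtain ⟨x, rfl⟩ := T.surjective_rangeRestrict v
    rw [hgT]
    exact hf' x
  obtain ⟨Φ, hΦ, -⟩ := exists_extension_norm_eq _ (g.mkContinuous C hg_bound)
  refine ⟨(InnerProductSpace.toDual 𝕜 H).symm Φ, fun x => ?_⟩
  rw [← inner_conj_symm, InnerProductSpace.toDual_symm_apply]
  have hΦT : Φ (T x) = f' x := (hΦ (T.rangeRestrict x)).trans (hgT x)
  simp [hΦT, f']

theorem stmt_1_general
    {E F : Type*} [AddCommGroup E] [Module ℂ E] [AddCommGroup F] [Module ℂ F]
    (p : F →ₗ[ℂ] E →ₗ⋆[ℂ] ℂ)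
    (hsepF : ∀ f : F, (∀ x : E, p f x = 0) → f = 0)
    {H : Type*} [NormedAddCommGroup H] [InnerProductSpace ℂ H] [CompleteSpace H]
    (T : E →ₗ[ℂ] H) (Tadj : H →ₗ[ℂ] F)
    (hadj : ∀ (h : H) (x : E), p (Tadj h) x = @inner ℂ _ _ (T x) h)
    (y : F) :
    y ∈ Set.range Tadj ↔
      ∃ m : ℝ, 0 ≤ m ∧ ∀ x : E, ‖p y x‖ ^ 2 ≤ m * ‖T x‖ ^ 2 := by
  constructor
  · rintro ⟨h, rfl⟩
    refine ⟨‖h‖ ^ 2, by positivity, fun x => ?_⟩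
    rw [hadj, ← mul_pow, mul_comm]
    gcongr
    exact norm_inner_le_norm (T x) h
  · rintro ⟨m, hm, hbound⟩
    have hbound' : ∀ x, ‖p y x‖ ≤ √m * ‖T x‖ := fun x => by
      refine le_of_sq_le_sq ?_ (by positivity)
      rw [mul_pow, Real.sq_sqrt hm]
      exact hbound x
    obtain ⟨h, hh⟩ := exists_eq_inner_of_norm_le_mul_norm T (p y) _ hbound'
    refine ⟨h, (sub_eq_zero.mp (hsepF _ fun x => ?_)).symm⟩
    rw [map_sub, LinearMap.sub_apply, hadj, hh, sub_self]

/-- **Range of the adjoint operator** (Lemma 2.3). `p` is the anti-duality pairing of the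
anti-dual pair ⟨F, E⟩ (linear in the `F`-variable, conjugate-linear in the `E`-variable),
separating the points of `E` and `F`. `T : E → H` is a weakly continuous linear operator into
a Hilbert space, encoded together with its adjoint `Tadj : H → F` via the defining identity
`⟨T* h, x⟩ = ⟪T x, h⟫`. A vector `y ∈ F` lies in the range of `T*` iff
`|⟨y, x⟩|² ≤ m ‖T x‖²` for some constant `m ≥ 0` and all `x ∈ E`. -/
theorem stmt_1
    {E F : Type*} [AddCommGroup E] [Module ℂ E] [AddCommGroup F] [Module ℂ F]
    (p : F →ₗ[ℂ] E →ₗ⋆[ℂ] ℂ)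
    (hsepE : ∀ x : E, (∀ f : F, p f x = 0) → x = 0)
    (hsepF : ∀ f : F, (∀ x : E, p f x = 0) → f = 0)
    {H : Type*} [NormedAddCommGroup H] [InnerProductSpace ℂ H] [CompleteSpace H]
    (T : E →ₗ[ℂ] H) (Tadj : H →ₗ[ℂ] F)
    (hadj : ∀ (h : H) (x : E), p (Tadj h) x = @inner ℂ _ _ (T x) h)
    (y : F) :
    y ∈ Set.range Tadj ↔
      ∃ m : ℝ, 0 ≤ m ∧ ∀ x : E, ‖p y x‖ ^ 2 ≤ m * ‖T x‖ ^ 2 :=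
  stmt_1_general p hsepF T Tadj hadj y
end

section
/- Let H and K be Hilbert spaces and T ⊆ H × K a closed linear relation. Let P be the orthogonal projection of K onto mul T = {k : (0,k) ∈ T} and Q the orthogonal projection of H onto ker T = {h : (h,0) ∈ T}. Then the linear relation S = {((I−Q)h, (I−P)k) : (h,k) ∈ T} is the graph of an injective closed linear operator. -/
/-- **Regularized relation is an injective closed operator** (Lemma 3.4). For a closed linear
relation `T ⊆ H × K`, with `kerT = {h | (h,0) ∈ T}` and `mulT = {k | (0,k) ∈ T}`, the relation
`S = {((I−Q)h, (I−P)k) : (h,k) ∈ T}` (where `Q`, `P` are the orthogonal projections onto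
`kerT`, `mulT`; the projected pair `q` of `p` is characterized by `p - q` lying in the subspace
and `q` lying in its orthogonal complement) is a linear subspace which is the graph of an
injective closed operator: `S` is closed, its multivalued part is trivial and its kernel is
trivial. -/
theorem stmt_2
    {H K : Type*} [NormedAddCommGroup H] [InnerProductSpace ℂ H] [CompleteSpace H]
    [NormedAddCommGroup K] [InnerProductSpace ℂ K] [CompleteSpace K]
    (T : Submodule ℂ (H × K)) (hT : IsClosed (T : Set (H × K)))
    (kerT : Submodule ℂ H) (mulT : Submodule ℂ K)
    (hker : kerT = T.comap (LinearMap.inl ℂ H K))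
    (hmul : mulT = T.comap (LinearMap.inr ℂ H K))
    (S : Set (H × K))
    (hS : S = {q : H × K | ∃ p ∈ (T : Set (H × K)),
        p.1 - q.1 ∈ kerT ∧ q.1 ∈ kerTᗮ ∧ p.2 - q.2 ∈ mulT ∧ q.2 ∈ mulTᗮ}) :
    (∃ S' : Submodule ℂ (H × K), (S' : Set (H × K)) = S) ∧
      IsClosed S ∧ (∀ k : K, (0, k) ∈ S → k = 0) ∧ (∀ h : H, (h, 0) ∈ S → h = 0) := by
  have hSeq : S = ((T ⊓ (kerTᗮ.prod mulTᗮ) : Submodule ℂ (H × K)) : Set (H × K)) := by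
    ext q
    simp only [hS, Set.mem_setOf_eq, SetLike.mem_coe, Submodule.mem_inf, Submodule.mem_prod]
    constructor
    · rintro ⟨p, hp, h1, h2, h3, h4⟩
      rw [hker] at h1
      rw [hmul] at h3
      have hk : ((p.1 - q.1, (0:K)) : H × K) ∈ T := h1
      have hm : (((0:H), p.2 - q.2) : H × K) ∈ T := h3
      have hq : q = p - (p.1 - q.1, (0:K)) - ((0:H), p.2 - q.2) := by
        apply Prod.ext <;> simp
      exact ⟨hq ▸ sub_mem (sub_mem hp hk) hm, h2, h4⟩
    · rintro ⟨hqT, hq1, hq2⟩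
      exact ⟨q, hqT, by simp, hq1, by simp, hq2⟩
  refine ⟨⟨_, hSeq.symm⟩, ?_, ?_, ?_⟩
  · rw [hSeq]
    have : ((T ⊓ (kerTᗮ.prod mulTᗮ) : Submodule ℂ (H × K)) : Set (H × K))
        = (T : Set (H × K)) ∩ ((kerTᗮ : Set H) ×ˢ (mulTᗮ : Set K)) := by
      ext q
      simp [Submodule.mem_inf]
    rw [this]
    exact hT.inter (kerT.isClosed_orthogonal.prod mulT.isClosed_orthogonal)
  · intro k hk
    rw [hSeq] at hk
    simp only [SetLike.mem_coe, Submodule.mem_inf, Submodule.mem_prod] at hk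
    obtain ⟨hkT, -, hk2⟩ := hk
    have hk1 : k ∈ mulT := by rw [hmul]; exact hkT
    exact (Submodule.disjoint_def.mp mulT.orthogonal_disjoint) k hk1 hk2
  · intro h hh
    rw [hSeq] at hh
    simp only [SetLike.mem_coe, Submodule.mem_inf, Submodule.mem_prod] at hh
    obtain ⟨hhT, hh1, -⟩ := hh
    have hh0 : h ∈ kerT := by rw [hker]; exact hhT
    exact (Submodule.disjoint_def.mp kerT.orthogonal_disjoint) h hh0 hh1
end

section
/- Let A, B be bounded positive operators on a complex Hilbert space H. Then the sequence of parallel sums ((nA) : B)_{n∈ℕ} is monotone increasing, bounded above by B, and its strong (equivalently, weak pointwise) limit B_a := lim_{n→∞} (nA) : B equals the A-absolutely continuous part of B in the Lebesgue decomposition of B with respect to A. -/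
/-!
The forms `inf_y (n⟨A(x - y), x - y⟩ + ⟨By, y⟩)` of `(nA) : B` increase with `n` and stay below
`⟨Bx, x⟩`, so (Vigier) the operators converge strongly to some `B_a ≤ B`. Since
`(nA) : B ≤ nA` and `(nA) : B → B_a` in form, `B_a ≪ A`.
For maximality, let `yₙ` almost minimize the `n`-th infimum. The parallelogram law makes `(yₙ)`
`B`-Cauchy, hence `C`-Cauchy, while `n⟨A(x - yₙ), x - yₙ⟩` stays bounded; so `C ≪ A` gives
`⟨C(x - yₙ), x - yₙ⟩ → 0`, and the triangle inequality for `√⟨C·, ·⟩` yields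
`⟨Cx, x⟩ ≤ limsup ⟨Byₙ, yₙ⟩ ≤ ⟨B_a x, x⟩`.
-/

open Filter

local notation "⟪" x ", " y "⟫" => @inner ℂ _ _ x y

variable {H : Type*} [NormedAddCommGroup H] [InnerProductSpace ℂ H] [CompleteSpace H]

/-- The quadratic-form order: `A ≤ B` iff `⟨Ax, x⟩ ≤ ⟨Bx, x⟩` for all `x`. -/
def QuadLE (A B : H →L[ℂ] H) : Prop :=
  ∀ x : H, (⟪A x, x⟫).re ≤ (⟪B x, x⟫).re

/-- `B` is absolutely continuous with respect to `A` (`B ≪ A`): for every sequence `(xₙ)`,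
if `⟨Axₙ, xₙ⟩ → 0` and `⟨B(xₙ−xₘ), xₙ−xₘ⟩ → 0` as `n, m → ∞`, then `⟨Bxₙ, xₙ⟩ → 0`. -/
def AbsCont (B A : H →L[ℂ] H) : Prop :=
  ∀ x : ℕ → H,
    Tendsto (fun n => (⟪A (x n), x n⟫).re) atTop (nhds 0) →
    (∀ ε > (0 : ℝ), ∃ N : ℕ, ∀ n ≥ N, ∀ m ≥ N,
      (⟪B (x n - x m), x n - x m⟫).re < ε) →
    Tendsto (fun n => (⟪B (x n), x n⟫).re) atTop (nhds 0)

/-- `A` and `B` are mutually singular (`A ⊥ B`): the only bounded positive operator `C` with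
`C ≤ A` and `C ≤ B` is `C = 0`. -/
def MutSing (A B : H →L[ℂ] H) : Prop :=
  ∀ C : H →L[ℂ] H, C.IsPositive → QuadLE C A → QuadLE C B → C = 0

open Topology ContinuousLinearMap

namespace ContinuousLinearMap

section InnerProductSpace

variable {E : Type*} [NormedAddCommGroup E] [InnerProductSpace ℂ E]

lemma reApplyInnerSelf_add_add_reApplyInnerSelf_sub (T : E →L[ℂ] E) (u v : E) :
    T.reApplyInnerSelf (u + v) + T.reApplyInnerSelf (u - v) =
      2 * T.reApplyInnerSelf u + 2 * T.reApplyInnerSelf v := by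
  simp only [reApplyInnerSelf_apply, map_add, map_sub, inner_add_left, inner_add_right,
    inner_sub_left, inner_sub_right]
  ring

lemma reApplyInnerSelf_neg (T : E →L[ℂ] E) (x : E) :
    T.reApplyInnerSelf (-x) = T.reApplyInnerSelf x := by
  simp [reApplyInnerSelf_apply]

lemma sub_reApplyInnerSelf (S T : E →L[ℂ] E) (x : E) :
    (S - T).reApplyInnerSelf x = S.reApplyInnerSelf x - T.reApplyInnerSelf x := by
  simp [reApplyInnerSelf_apply, inner_sub_left]

lemma real_smul_reApplyInnerSelf (t : ℝ) (T : E →L[ℂ] E) (x : E) :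
    (t • T).reApplyInnerSelf x = t * T.reApplyInnerSelf x := by
  simp only [reApplyInnerSelf_apply, smul_apply, ← Complex.coe_smul, inner_smul_left,
    Complex.conj_ofReal]
  simp

lemma reApplyInnerSelf_mul_self {S : E →L[ℂ] E} (hS : S.IsSymmetric) (x : E) :
    (S * S).reApplyInnerSelf x = ‖S x‖ ^ 2 := by
  rw [reApplyInnerSelf_apply, mul_apply_eq_comp, ← inner_self_eq_norm_sq (𝕜 := ℂ)]
  exact congrArg _ (hS (S x) x)

lemma IsPositive.reApplyInnerSelf_add_le {T : E →L[ℂ] E} (hT : T.IsPositive) (u v : E) :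
    T.reApplyInnerSelf (u + v) ≤ 2 * T.reApplyInnerSelf u + 2 * T.reApplyInnerSelf v := by
  rw [← reApplyInnerSelf_add_add_reApplyInnerSelf_sub]
  linarith [hT.2 (u - v)]

lemma isPositive_of_tendsto_apply {α : Type*} {l : Filter α} [l.NeBot] {T : α → E →L[ℂ] E}
    {T₀ : E →L[ℂ] E} (hT : ∀ᶠ i in l, (T i).IsPositive)
    (hlim : ∀ x, Tendsto (fun i => T i x) l (𝓝 (T₀ x))) : T₀.IsPositive := by
  refine ⟨fun x y => tendsto_nhds_unique ((hlim x).inner tendsto_const_nhds) ?_, fun x => ?_⟩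
  · refine (tendsto_const_nhds.inner (hlim y)).congr' ?_
    filter_upwards [hT] with i hi using (hi.isSymmetric x y).symm
  · refine ge_of_tendsto ((Complex.continuous_re.tendsto _).comp
      ((hlim x).inner tendsto_const_nhds)) ?_
    filter_upwards [hT] with i hi using hi.2 x

variable {α : Type*} {l : Filter α} [l.NeBot] {T : α → E →L[ℂ] E} {T₀ S : E →L[ℂ] E}

lemma ge_of_tendsto_apply (hlim : ∀ x, Tendsto (fun i => T i x) l (𝓝 (T₀ x)))
    (hS : ∀ᶠ i in l, S ≤ T i) : S ≤ T₀ :=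
  isPositive_of_tendsto_apply hS fun x => (hlim x).sub tendsto_const_nhds

lemma le_of_tendsto_apply (hlim : ∀ x, Tendsto (fun i => T i x) l (𝓝 (T₀ x)))
    (hS : ∀ᶠ i in l, T i ≤ S) : T₀ ≤ S :=
  isPositive_of_tendsto_apply hS fun x => tendsto_const_nhds.sub (hlim x)

end InnerProductSpace

namespace IsPositive

variable {T : H →L[ℂ] H} (hT : T.IsPositive)
include hT

lemma exists_isSelfAdjoint_eq_mul_self : ∃ S : H →L[ℂ] H, IsSelfAdjoint S ∧ T = S * S :=
  CStarAlgebra.nonneg_iff_exists_isSelfAdjoint_and_eq_mul_self.mp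
    ((nonneg_iff_isPositive T).mpr hT)

lemma sqrt_reApplyInnerSelf_add_le (u v : H) :
    √(T.reApplyInnerSelf (u + v)) ≤ √(T.reApplyInnerSelf u) + √(T.reApplyInnerSelf v) := by
  obtain ⟨S, hS, rfl⟩ := hT.exists_isSelfAdjoint_eq_mul_self
  simp only [reApplyInnerSelf_mul_self hS.isSymmetric, Real.sqrt_sq (norm_nonneg _), map_add]
  exact norm_add_le _ _

lemma norm_apply_sq_le (x : H) : ‖T x‖ ^ 2 ≤ ‖T‖ * T.reApplyInnerSelf x := by
  obtain ⟨S, hS, rfl⟩ := hT.exists_isSelfAdjoint_eq_mul_self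
  rw [reApplyInnerSelf_mul_self hS.isSymmetric, hS.norm_mul_self, mul_apply_eq_comp, ← mul_pow]
  exact pow_le_pow_left₀ (norm_nonneg _) (S.le_opNorm _) 2

end IsPositive

section Monotone

variable {P : ℕ → H →L[ℂ] H} {B : H →L[ℂ] H} (hP : Monotone P) (hPB : ∀ n, P n ≤ B)
include hP hPB

theorem cauchySeq_apply_of_monotone (x : H) : CauchySeq fun n => P n x := by
  have hq_mono : Monotone fun n => (P n).reApplyInnerSelf x := fun n m hnm => by
    simpa [sub_reApplyInnerSelf] using (hP hnm).2 x
  have hq_bdd : BddAbove (Set.range fun n => (P n).reApplyInnerSelf x) :=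
    ⟨B.reApplyInnerSelf x, by
      rintro _ ⟨n, rfl⟩
      simpa [sub_reApplyInnerSelf] using (hPB n).2 x⟩
  set L := ⨆ n, (P n).reApplyInnerSelf x
  have hL : Tendsto (fun n => (P n).reApplyInnerSelf x) atTop (𝓝 L) :=
    tendsto_atTop_ciSup hq_mono hq_bdd
  set K := ‖B - P 0‖
  refine cauchySeq_of_le_tendsto_0' (fun n => √(K * (L - (P n).reApplyInnerSelf x)))
    (fun n m hnm => ?_) ?_
  · have hD : (P m - P n).IsPositive := hP hnm
    have hDK : ‖P m - P n‖ ≤ K := CStarAlgebra.norm_le_norm_of_nonneg_of_le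
      ((nonneg_iff_isPositive _).2 hD) (sub_le_sub (hPB m) (hP (Nat.zero_le n)))
    have hqD : (P m - P n).reApplyInnerSelf x ≤ L - (P n).reApplyInnerSelf x := by
      rw [sub_reApplyInnerSelf]
      linarith [le_ciSup hq_bdd m]
    rw [dist_comm, dist_eq_norm, ← sub_apply]
    refine Real.le_sqrt_of_sq_le ?_
    calc ‖(P m - P n) x‖ ^ 2 ≤ ‖P m - P n‖ * (P m - P n).reApplyInnerSelf x :=
          hD.norm_apply_sq_le x
      _ ≤ K * (L - (P n).reApplyInnerSelf x) := mul_le_mul hDK hqD (hD.2 x) (norm_nonneg _)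
  · simpa using ((hL.const_sub L).const_mul K).sqrt

theorem exists_tendsto_apply_of_monotone :
    ∃ T : H →L[ℂ] H, (∀ x, Tendsto (fun n => P n x) atTop (𝓝 (T x))) ∧ (∀ n, P n ≤ T) ∧
      T ≤ B := by
  choose f hf using fun x => cauchySeq_tendsto_of_complete (cauchySeq_apply_of_monotone hP hPB x)
  set T := continuousLinearMapOfTendsto P (tendsto_pi_nhds.2 hf)
  have hT : ∀ x, Tendsto (fun n => P n x) atTop (𝓝 (T x)) := hf
  exact ⟨T, hT, fun n => ge_of_tendsto_apply hT ((eventually_ge_atTop n).mono fun _ => (hP ·)),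
    le_of_tendsto_apply hT (.of_forall hPB)⟩

end Monotone

end ContinuousLinearMap

lemma quadLE_iff_le {S T : H →L[ℂ] H} (hS : IsSelfAdjoint S) (hT : IsSelfAdjoint T) :
    QuadLE S T ↔ S ≤ T := by
  simp only [ContinuousLinearMap.le_def, isPositive_def, sub_reApplyInnerSelf, sub_nonneg]
  exact ⟨fun h => ⟨(hT.sub hS).isSymmetric, h⟩, fun h => h.2⟩

section ParallelSum

variable {E : Type*} [NormedAddCommGroup E] [InnerProductSpace ℂ E]

noncomputable def parallelSumObjective (A B : E →L[ℂ] E) (t : ℝ) (x y : E) : ℝ :=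
  t * A.reApplyInnerSelf (x - y) + B.reApplyInnerSelf y

noncomputable def parallelSumForm (A B : E →L[ℂ] E) (t : ℝ) (x : E) : ℝ :=
  ⨅ y, parallelSumObjective A B t x y

def FormCauchy (T : E →L[ℂ] E) (u : ℕ → E) : Prop :=
  ∀ ε > (0 : ℝ), ∃ N : ℕ, ∀ n ≥ N, ∀ m ≥ N, T.reApplyInnerSelf (u n - u m) < ε

lemma FormCauchy.mono {S T : E →L[ℂ] E} {u : ℕ → E}
    (hST : ∀ x, S.reApplyInnerSelf x ≤ T.reApplyInnerSelf x) (h : FormCauchy T u) :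
    FormCauchy S u := fun ε hε =>
  (h ε hε).imp fun _ hN n hn m hm => (hST _).trans_lt (hN n hn m hm)

lemma FormCauchy.const_sub {T : E →L[ℂ] E} {u : ℕ → E} (h : FormCauchy T u) (x : E) :
    FormCauchy T fun n => x - u n := fun ε hε =>
  (h ε hε).imp fun _ hN n hn m hm => by
    simpa only [sub_sub_sub_cancel_left] using hN m hm n hn

lemma formCauchy_of_le {T : E →L[ℂ] E} {u : ℕ → E} {b : ℕ → ℝ} (hb : Tendsto b atTop (𝓝 0))
    (h : ∀ n m, n ≤ m → T.reApplyInnerSelf (u n - u m) ≤ b n) : FormCauchy T u := by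
  intro ε hε
  obtain ⟨N, hN⟩ := eventually_atTop.1 (hb.eventually (gt_mem_nhds hε))
  refine ⟨N, fun n hn m hm => ?_⟩
  rcases le_total n m with hnm | hmn
  · exact (h n m hnm).trans_lt (hN n hn)
  · rw [← neg_sub, reApplyInnerSelf_neg]
    exact (h m n hmn).trans_lt (hN m hm)

variable {A B : E →L[ℂ] E} (hA : A.IsPositive) (hB : B.IsPositive) {s t : ℝ} {x : E}
include hA hB

lemma parallelSumObjective_nonneg (ht : 0 ≤ t) (y : E) : 0 ≤ parallelSumObjective A B t x y :=
  add_nonneg (mul_nonneg ht (hA.2 _)) (hB.2 _)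

lemma parallelSumForm_le (ht : 0 ≤ t) (y : E) :
    parallelSumForm A B t x ≤ parallelSumObjective A B t x y :=
  ciInf_le ⟨0, Set.forall_mem_range.2 (parallelSumObjective_nonneg hA hB ht)⟩ y

lemma parallelSumForm_nonneg (ht : 0 ≤ t) : 0 ≤ parallelSumForm A B t x :=
  le_ciInf (parallelSumObjective_nonneg hA hB ht)

lemma parallelSumForm_le_right (ht : 0 ≤ t) :
    parallelSumForm A B t x ≤ B.reApplyInnerSelf x := by
  simpa [parallelSumObjective, reApplyInnerSelf_apply] using parallelSumForm_le hA hB ht (x := x) x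

lemma parallelSumForm_le_left (ht : 0 ≤ t) :
    parallelSumForm A B t x ≤ t * A.reApplyInnerSelf x := by
  simpa [parallelSumObjective, reApplyInnerSelf_apply] using parallelSumForm_le hA hB ht (x := x) 0

lemma parallelSumForm_mono (hs : 0 ≤ s) (hst : s ≤ t) :
    parallelSumForm A B s x ≤ parallelSumForm A B t x :=
  le_ciInf fun y => (parallelSumForm_le hA hB hs y).trans <|
    add_le_add_left (mul_le_mul_of_nonneg_right hst (hA.2 _)) _

/-- Parallelogram law at `y`, `y'` and their midpoint. -/
lemma reApplyInnerSelf_sub_le_parallelSumObjective (ht : 0 ≤ t) (y y' : E) :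
    B.reApplyInnerSelf (y - y') ≤ 2 * (parallelSumObjective A B t x y +
      parallelSumObjective A B t x y' - 2 * parallelSumForm A B t x) := by
  set m : E := (2 : ℂ)⁻¹ • (y + y')
  set d : E := (2 : ℂ)⁻¹ • (y - y')
  have hA' := reApplyInnerSelf_add_add_reApplyInnerSelf_sub A (x - m) d
  rw [show x - m + d = x - y' by module, show x - m - d = x - y by module] at hA'
  have hB' := reApplyInnerSelf_add_add_reApplyInnerSelf_sub B m d
  rw [show m + d = y by module, show m - d = y' by module] at hB'
  have hd : B.reApplyInnerSelf d = B.reApplyInnerSelf (y - y') / 4 := by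
    simp only [d, reApplyInnerSelf_smul]
    norm_num
    ring
  have hmin := parallelSumForm_le hA hB ht (x := x) m
  simp only [parallelSumObjective] at hmin ⊢
  linarith [congrArg (t * ·) hA', mul_nonneg ht (hA.2 d)]

section NearMinimizers

variable {L : ℝ} (hL : Tendsto (fun n : ℕ => parallelSumForm A B n x) atTop (𝓝 L))
include hL

lemma parallelSumForm_le_of_tendsto (n : ℕ) : parallelSumForm A B n x ≤ L :=
  Monotone.ge_of_tendsto (fun _ _ h => parallelSumForm_mono hA hB (Nat.cast_nonneg _)
    (Nat.cast_le.2 h)) hL n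

variable {y : ℕ → E}
  (hy : ∀ n : ℕ, parallelSumObjective A B n x (y n) < parallelSumForm A B n x + 1 / (n + 1))
include hy

lemma tendsto_reApplyInnerSelf_sub_of_parallelSumObjective_lt :
    Tendsto (fun n => A.reApplyInnerSelf (x - y n)) atTop (𝓝 0) := by
  have hbound : ∀ n : ℕ, 1 ≤ n → A.reApplyInnerSelf (x - y n) ≤ (L + 1) / n := by
    intro n hn
    have hn' : (1 : ℝ) ≤ n := Nat.one_le_cast.2 hn
    have hinv : 1 / ((n : ℝ) + 1) ≤ 1 := div_le_one_of_le₀ (by linarith) (by positivity)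
    have hyn := hy n
    simp only [parallelSumObjective] at hyn
    rw [le_div_iff₀ (by positivity), mul_comm]
    linarith [parallelSumForm_le_of_tendsto hA hB hL n, hB.2 (y n)]
  refine tendsto_of_tendsto_of_tendsto_of_le_of_le' tendsto_const_nhds
    (tendsto_const_div_atTop_nhds_zero_nat (L + 1)) (Eventually.of_forall fun n => hA.2 _) ?_
  filter_upwards [eventually_ge_atTop 1] with n hn using hbound n hn

lemma formCauchy_of_parallelSumObjective_lt : FormCauchy B y := by
  refine formCauchy_of_le (b := fun n => 2 * (L - parallelSumForm A B n x + 2 / (n + 1)))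
    ?_ fun n m hnm => ?_
  · simpa using (((hL.const_sub L).add
      ((tendsto_const_div_atTop_nhds_zero_nat 2).comp (tendsto_add_atTop_nat 1))).const_mul 2)
  · have hnm' : (n : ℝ) ≤ m := Nat.cast_le.2 hnm
    have hobj : parallelSumObjective A B n x (y m) ≤ parallelSumObjective A B m x (y m) :=
      add_le_add_left (mul_le_mul_of_nonneg_right hnm' (hA.2 _)) _
    have hm : 1 / ((m : ℝ) + 1) ≤ 1 / (n + 1) := by gcongr
    have h2 : 2 / ((n : ℝ) + 1) = 2 * (1 / (n + 1)) := by ring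
    have := reApplyInnerSelf_sub_le_parallelSumObjective hA hB (Nat.cast_nonneg n) (x := x)
      (y n) (y m)
    linarith [hy n, hy m, parallelSumForm_le_of_tendsto hA hB hL m]

end NearMinimizers

end ParallelSum

omit [CompleteSpace H] in
theorem absCont_of_tendsto_reApplyInnerSelf {A T : H →L[ℂ] H} {P : ℕ → H →L[ℂ] H} {c : ℕ → ℝ}
    (hP : ∀ n, (P n).IsPositive) (hPT : ∀ n, P n ≤ T)
    (hPA : ∀ n x, (P n).reApplyInnerSelf x ≤ c n * A.reApplyInnerSelf x)
    (hlim : ∀ x, Tendsto (fun n => (P n).reApplyInnerSelf x) atTop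
      (𝓝 (T.reApplyInnerSelf x))) :
    AbsCont T A := by
  intro u (hAu : Tendsto (fun n => A.reApplyInnerSelf (u n)) atTop (𝓝 0))
    (hTu : FormCauchy T u)
  show Tendsto (fun n => T.reApplyInnerSelf (u n)) atTop (𝓝 0)
  have hT : T.IsPositive :=
    (nonneg_iff_isPositive T).1 (((nonneg_iff_isPositive _).2 (hP 0)).trans (hPT 0))
  rw [Metric.tendsto_atTop]
  intro ε hε
  obtain ⟨N, hN⟩ := hTu (ε / 5) (by positivity)
  obtain ⟨n, hn⟩ : ∃ n, T.reApplyInnerSelf (u N) - (P n).reApplyInnerSelf (u N) < ε / 5 := by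
    have := (tendsto_const_nhds (x := T.reApplyInnerSelf (u N))).sub (hlim (u N))
    rw [sub_self] at this
    exact (this.eventually (gt_mem_nhds (by positivity))).exists
  obtain ⟨K, hK⟩ : ∃ K, ∀ k ≥ K, c n * A.reApplyInnerSelf (u k) < ε / 5 := by
    have := hAu.const_mul (c n)
    rw [mul_zero] at this
    exact eventually_atTop.1 (this.eventually (gt_mem_nhds (by positivity)))
  refine ⟨max N K, fun k hk => ?_⟩
  -- `⟨T uₖ, uₖ⟩ = ⟨(T - Pₙ) uₖ, uₖ⟩ + ⟨Pₙ uₖ, uₖ⟩`, and the first term is controlled through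
  -- `uₖ = (uₖ - u_N) + u_N`.
  have hsplit := (hPT n).reApplyInnerSelf_add_le (u k - u N) (u N)
  rw [sub_add_cancel] at hsplit
  simp only [sub_reApplyInnerSelf] at hsplit
  rw [Real.dist_eq, sub_zero, abs_of_nonneg (hT.2 _)]
  linarith [hN k (le_of_max_le_left hk) N le_rfl, hK k (le_of_max_le_right hk), hPA n (u k),
    (hP n).2 (u k - u N)]

theorem reApplyInnerSelf_le_of_tendsto_parallelSumForm {A B C : H →L[ℂ] H} (hA : A.IsPositive)
    (hB : B.IsPositive) (hC : C.IsPositive) (hCB : QuadLE C B) (hCA : AbsCont C A) {x : H}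
    {L : ℝ} (hL : Tendsto (fun n : ℕ => parallelSumForm A B n x) atTop (𝓝 L)) :
    C.reApplyInnerSelf x ≤ L := by
  have hnear : ∀ n : ℕ, ∃ y,
      parallelSumObjective A B n x y < parallelSumForm A B n x + 1 / (n + 1) := fun n =>
    exists_lt_of_ciInf_lt (lt_add_of_pos_right _ Nat.one_div_pos_of_nat)
  choose y hy using hnear
  have hCz : Tendsto (fun n => C.reApplyInnerSelf (x - y n)) atTop (𝓝 0) :=
    hCA _ (tendsto_reApplyInnerSelf_sub_of_parallelSumObjective_lt hA hB hL hy)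
      (((formCauchy_of_parallelSumObjective_lt hA hB hL hy).mono hCB).const_sub x)
  have hCy : ∀ n : ℕ, C.reApplyInnerSelf (y n) ≤ L + 1 / (n + 1) := fun n => by
    have hCBy : C.reApplyInnerSelf (y n) ≤ B.reApplyInnerSelf (y n) := hCB (y n)
    have hyn := hy n
    simp only [parallelSumObjective] at hyn
    linarith [parallelSumForm_le_of_tendsto hA hB hL n,
      mul_nonneg (Nat.cast_nonneg n) (hA.2 (x - y n))]
  have hbound : ∀ n : ℕ, √(C.reApplyInnerSelf x) ≤
      √(C.reApplyInnerSelf (x - y n)) + √(L + 1 / (n + 1)) := fun n =>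
    calc √(C.reApplyInnerSelf x) = √(C.reApplyInnerSelf (x - y n + y n)) := by
          rw [sub_add_cancel]
      _ ≤ √(C.reApplyInnerSelf (x - y n)) + √(C.reApplyInnerSelf (y n)) :=
          hC.sqrt_reApplyInnerSelf_add_le _ _
      _ ≤ √(C.reApplyInnerSelf (x - y n)) + √(L + 1 / (n + 1)) := by grw [hCy n]
  have hlim : Tendsto (fun n : ℕ => √(C.reApplyInnerSelf (x - y n)) + √(L + 1 / (n + 1)))
      atTop (𝓝 √L) := by
    simpa using hCz.sqrt.add
      (tendsto_const_nhds.add tendsto_one_div_add_atTop_nhds_zero_nat).sqrt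
  have hL0 : 0 ≤ L := ge_of_tendsto' hL fun n => parallelSumForm_nonneg hA hB n.cast_nonneg
  exact (Real.sqrt_le_sqrt_iff hL0).1 (ge_of_tendsto' hlim hbound)

/-- **The absolutely continuous part via parallel sums** (Theorem 4.6, Hilbert space case).
If `P n` is the parallel sum `(nA) : B` (characterized by its quadratic form), then the
sequence `(P n)` is monotone increasing, bounded above by `B`, and converges weakly pointwise
to a positive operator `B_a` which is the `A`-absolutely continuous part of `B`: `B_a ≤ B`,
`B_a ≪ A`, and `B_a` is the greatest positive operator `C ≤ B` with `C ≪ A`. -/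
theorem stmt_10 (A B : H →L[ℂ] H) (hA : A.IsPositive) (hB : B.IsPositive)
    (P : ℕ → H →L[ℂ] H) (hP : ∀ n, (P n).IsPositive)
    (hPform : ∀ n, ∀ x : H, (⟪P n x, x⟫).re =
      ⨅ y : H, ((⟪((n : ℝ) • A) (x - y), x - y⟫).re + (⟪B y, y⟫).re)) :
    (∀ n, QuadLE (P n) (P (n + 1))) ∧ (∀ n, QuadLE (P n) B) ∧
      ∃ Ba : H →L[ℂ] H, Ba.IsPositive ∧
        (∀ x y : H, Tendsto (fun n => ⟪P n x, y⟫) atTop (nhds ⟪Ba x, y⟫)) ∧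
        QuadLE Ba B ∧ AbsCont Ba A ∧
        ∀ C : H →L[ℂ] H, C.IsPositive → QuadLE C B → AbsCont C A → QuadLE C Ba := by
  have hform : ∀ (n : ℕ) x, (P n).reApplyInnerSelf x = parallelSumForm A B n x := fun n x =>
    (hPform n x).trans <| iInf_congr fun y => congrArg (· + _) (real_smul_reApplyInnerSelf _ _ _)
  have hQmono : ∀ n, QuadLE (P n) (P (n + 1)) := fun n x => by
    show (P n).reApplyInnerSelf x ≤ (P (n + 1)).reApplyInnerSelf x
    rw [hform, hform]
    exact parallelSumForm_mono hA hB n.cast_nonneg (by push_cast; linarith)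
  have hQB : ∀ n, QuadLE (P n) B := fun n x =>
    (hform n x).trans_le (parallelSumForm_le_right hA hB n.cast_nonneg)
  obtain ⟨Ba, hBa, hPBa, hBaB⟩ := exists_tendsto_apply_of_monotone
    (monotone_nat_of_le_succ fun n =>
      (quadLE_iff_le (hP n).isSelfAdjoint (hP (n + 1)).isSelfAdjoint).1 (hQmono n))
    fun n => (quadLE_iff_le (hP n).isSelfAdjoint hB.isSelfAdjoint).1 (hQB n)
  have hBa_pos : Ba.IsPositive :=
    (nonneg_iff_isPositive _).1 (((nonneg_iff_isPositive _).2 (hP 0)).trans (hPBa 0))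
  have hweak : ∀ x y : H, Tendsto (fun n => ⟪P n x, y⟫) atTop (nhds ⟪Ba x, y⟫) :=
    fun x y => (hBa x).inner tendsto_const_nhds
  have hq : ∀ x, Tendsto (fun n => (P n).reApplyInnerSelf x) atTop (𝓝 (Ba.reApplyInnerSelf x)) :=
    fun x => (Complex.continuous_re.tendsto _).comp (hweak x x)
  refine ⟨hQmono, hQB, Ba, hBa_pos, hweak,
    (quadLE_iff_le hBa_pos.isSelfAdjoint hB.isSelfAdjoint).2 hBaB, ?_, fun C hC hCB hCA x => ?_⟩
  · exact absCont_of_tendsto_reApplyInnerSelf hP hPBa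
      (fun n x => (hform n x).trans_le (parallelSumForm_le_left hA hB n.cast_nonneg)) hq
  · exact reApplyInnerSelf_le_of_tendsto_parallelSumForm hA hB hC hCB hCA
      (L := Ba.reApplyInnerSelf x) (by simpa only [hform] using hq x)
end

section
/- Let A, B be bounded positive operators on a complex Hilbert space H. Then A ⊥ B if and only if for every x ∈ H there exists a sequence (xₙ) in H such that ⟨Axₙ, xₙ⟩ → 0 and ⟨B(x−xₙ), x−xₙ⟩ → 0. -/
/-!
Let `A : B` be the positive operator whose quadratic form at `x` is
`inf_y ⟨Ay, y⟩ + ⟨B(x - y), x - y⟩` (the parallel sum). In `H ⊕ H` this infimum is the squared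
distance from `(0, √B x)` to the range of `y ↦ (√A y, √B y)`, so `A : B = F†F` with `F x` the
component of `(0, √B x)` orthogonal to that range. Taking `y = x` and `y = 0` gives
`A : B ≤ A` and `A : B ≤ B`; hence if `A ⊥ B` then `F = 0`, `(0, √B x)` lies in the closure of
the range, and an approximating sequence is the required `(xₙ)`. Conversely, if `C ≤ A` and
`C ≤ B`, then `‖√C x‖ ≤ ‖√C xₙ‖ + ‖√C (x - xₙ)‖ ≤ ‖√A xₙ‖ + ‖√B (x - xₙ)‖ → 0`.
-/

open Filter

local notation "⟪" x ", " y "⟫" => @inner ℂ _ _ x y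

variable {H : Type*} [NormedAddCommGroup H] [InnerProductSpace ℂ H] [CompleteSpace H]

open ContinuousLinearMap
open scoped InnerProduct

section OrthogonalResidual

variable {𝕜 E F : Type*} [RCLike 𝕜] [NormedAddCommGroup E] [InnerProductSpace 𝕜 E]
  [NormedAddCommGroup F] [InnerProductSpace 𝕜 F] [CompleteSpace F]

noncomputable def ContinuousLinearMap.orthogonalResidual (J V : E →L[𝕜] F) : E →L[𝕜] V.rangeᗮ :=
  V.rangeᗮ.orthogonalProjectionOnto ∘L J

variable (J V : E →L[𝕜] F)

lemma ContinuousLinearMap.norm_orthogonalResidual_le (x y : E) :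
    ‖J.orthogonalResidual V x‖ ≤ ‖J x - V y‖ := by
  have hVy : V.rangeᗮ.orthogonalProjectionOnto (V y) = 0 :=
    V.range.orthogonalProjectionOnto_orthogonal_apply_eq_zero (LinearMap.mem_range_self _ y)
  calc ‖J.orthogonalResidual V x‖ = ‖V.rangeᗮ.orthogonalProjectionOnto (J x - V y)‖ := by
        rw [map_sub, hVy, sub_zero]; rfl
    _ ≤ ‖J x - V y‖ := V.rangeᗮ.norm_orthogonalProjectionOnto_apply_le _

lemma ContinuousLinearMap.mem_closure_range_of_orthogonalResidual_eq_zero {x : E}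
    (hx : J.orthogonalResidual V x = 0) : J x ∈ closure (Set.range V) := by
  have : J x ∈ V.rangeᗮᗮ := Submodule.orthogonalProjectionOnto_eq_zero_iff.mp hx
  rwa [V.range.orthogonal_orthogonal_eq_closure, ← SetLike.mem_coe,
    Submodule.topologicalClosure_coe] at this

end OrthogonalResidual

section PositiveSqrt

lemma re_inner_apply_self_eq_norm_sqrt_sq {T : H →L[ℂ] H} (hT : T.IsPositive) (x : H) :
    (⟪T x, x⟫).re = ‖CFC.sqrt T x‖ ^ 2 := by
  have hT0 : 0 ≤ T := (nonneg_iff_isPositive T).mpr hT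
  have hsa : IsSelfAdjoint (CFC.sqrt T) := (CFC.sqrt_nonneg T).isSelfAdjoint
  have hx : T x = CFC.sqrt T (CFC.sqrt T x) := by
    conv_lhs => rw [← CFC.sqrt_mul_sqrt_self T]
    rfl
  rw [hx, ← adjoint_inner_right, hsa.adjoint_eq, inner_self_eq_norm_sq_to_K]
  norm_cast

lemma norm_sqrt_apply_le_of_quadLE {C A : H →L[ℂ] H} (hC : C.IsPositive) (hA : A.IsPositive)
    (h : QuadLE C A) (x : H) : ‖CFC.sqrt C x‖ ≤ ‖CFC.sqrt A x‖ := by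
  have := h x
  rw [re_inner_apply_self_eq_norm_sqrt_sq hC, re_inner_apply_self_eq_norm_sqrt_sq hA] at this
  exact (pow_le_pow_iff_left₀ (norm_nonneg _) (norm_nonneg _) two_ne_zero).mp this

lemma tendsto_norm_sqrt_apply_of_tendsto_re_inner {T : H →L[ℂ] H} (hT : T.IsPositive)
    {s : ℕ → H} (hs : Tendsto (fun n => (⟪T (s n), s n⟫).re) atTop (nhds 0)) :
    Tendsto (fun n => ‖CFC.sqrt T (s n)‖) atTop (nhds 0) := by
  simp_rw [re_inner_apply_self_eq_norm_sqrt_sq hT] at hs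
  simpa using hs.sqrt

end PositiveSqrt

section ParallelSum

variable (A B : H →L[ℂ] H)

noncomputable def sqrtPair : H →L[ℂ] WithLp 2 (H × H) :=
  (WithLp.prodContinuousLinearEquiv 2 ℂ H H).symm.toContinuousLinearMap ∘L
    (CFC.sqrt A).prod (CFC.sqrt B)

noncomputable def parallelSumFactor : H →L[ℂ] (sqrtPair A B).rangeᗮ :=
  (sqrtPair 0 B).orthogonalResidual (sqrtPair A B)

noncomputable def parallelSum : H →L[ℂ] H := (parallelSumFactor A B)† ∘L parallelSumFactor A B

lemma isPositive_parallelSum : (parallelSum A B).IsPositive :=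
  isPositive_adjoint_comp_self _

lemma re_inner_parallelSum (x : H) :
    (⟪parallelSum A B x, x⟫).re = ‖parallelSumFactor A B x‖ ^ 2 := by
  rw [parallelSum, comp_apply, adjoint_inner_left, inner_self_eq_norm_sq_to_K]
  norm_cast

variable {A B}

lemma norm_sqrtPair_sub_sq (hA : A.IsPositive) (hB : B.IsPositive) (x y : H) :
    ‖sqrtPair 0 B x - sqrtPair A B y‖ ^ 2 = (⟪A y, y⟫).re + (⟪B (x - y), x - y⟫).re := by
  rw [re_inner_apply_self_eq_norm_sqrt_sq hA, re_inner_apply_self_eq_norm_sqrt_sq hB, map_sub]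
  simp [sqrtPair, WithLp.prod_norm_sq_eq_of_L2]

lemma norm_parallelSumFactor_sq_le (hA : A.IsPositive) (hB : B.IsPositive) (x y : H) :
    ‖parallelSumFactor A B x‖ ^ 2 ≤ (⟪A y, y⟫).re + (⟪B (x - y), x - y⟫).re := by
  rw [← norm_sqrtPair_sub_sq hA hB]
  gcongr
  exact norm_orthogonalResidual_le _ _ x y

lemma quadLE_parallelSum_left (hA : A.IsPositive) (hB : B.IsPositive) :
    QuadLE (parallelSum A B) A := fun x => by
  simpa [re_inner_parallelSum] using norm_parallelSumFactor_sq_le hA hB x x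

lemma quadLE_parallelSum_right (hA : A.IsPositive) (hB : B.IsPositive) :
    QuadLE (parallelSum A B) B := fun x => by
  simpa [re_inner_parallelSum] using norm_parallelSumFactor_sq_le hA hB x 0

end ParallelSum

section Singularity

variable {A B : H →L[ℂ] H}

lemma exists_seq_of_parallelSum_eq_zero (hA : A.IsPositive) (hB : B.IsPositive)
    (h : parallelSum A B = 0) (x : H) :
    ∃ s : ℕ → H,
      Tendsto (fun n => (⟪A (s n), s n⟫).re) atTop (nhds 0) ∧
      Tendsto (fun n => (⟪B (x - s n), x - s n⟫).re) atTop (nhds 0) := by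
  have hx : parallelSumFactor A B x = 0 := by
    simpa [h] using (re_inner_parallelSum A B x).symm
  obtain ⟨v, hv, hlim⟩ := mem_closure_iff_seq_limit.mp
    (mem_closure_range_of_orthogonalResidual_eq_zero _ _ hx)
  choose s hs using hv
  have hdist : Tendsto (fun n => ‖sqrtPair 0 B x - sqrtPair A B (s n)‖ ^ 2) atTop (nhds 0) := by
    simpa [hs, norm_sub_rev] using ((tendsto_iff_norm_sub_tendsto_zero.mp hlim).pow 2)
  simp_rw [norm_sqrtPair_sub_sq hA hB] at hdist
  exact ⟨s, squeeze_zero (fun n => hA.re_inner_nonneg_left _)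
      (fun n => le_add_of_nonneg_right (hB.re_inner_nonneg_left _)) hdist,
    squeeze_zero (fun n => hB.re_inner_nonneg_left _)
      (fun n => le_add_of_nonneg_left (hA.re_inner_nonneg_left _)) hdist⟩

lemma eq_zero_of_quadLE_of_forall_exists_seq {C : H →L[ℂ] H} (hA : A.IsPositive)
    (hB : B.IsPositive) (hC : C.IsPositive) (hCA : QuadLE C A) (hCB : QuadLE C B)
    (hseq : ∀ x : H, ∃ s : ℕ → H,
      Tendsto (fun n => (⟪A (s n), s n⟫).re) atTop (nhds 0) ∧
      Tendsto (fun n => (⟪B (x - s n), x - s n⟫).re) atTop (nhds 0)) :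
    C = 0 := by
  have hsqrt : ∀ x, CFC.sqrt C x = 0 := by
    intro x
    obtain ⟨s, hsA, hsB⟩ := hseq x
    have hbound : ∀ n, ‖CFC.sqrt C x‖ ≤ ‖CFC.sqrt A (s n)‖ + ‖CFC.sqrt B (x - s n)‖ := fun n =>
      calc ‖CFC.sqrt C x‖ = ‖CFC.sqrt C (s n) + CFC.sqrt C (x - s n)‖ := by
            rw [← map_add, add_sub_cancel]
        _ ≤ ‖CFC.sqrt C (s n)‖ + ‖CFC.sqrt C (x - s n)‖ := norm_add_le _ _
        _ ≤ _ := add_le_add (norm_sqrt_apply_le_of_quadLE hC hA hCA _)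
            (norm_sqrt_apply_le_of_quadLE hC hB hCB _)
    have hlim := (tendsto_norm_sqrt_apply_of_tendsto_re_inner hA hsA).add
      (tendsto_norm_sqrt_apply_of_tendsto_re_inner hB hsB)
    rw [add_zero] at hlim
    exact norm_le_zero_iff.mp (ge_of_tendsto' hlim hbound)
  exact (CFC.sqrt_eq_zero_iff C ((nonneg_iff_isPositive C).mpr hC)).mp (ext hsqrt)

end Singularity

/-- **Metric characterization of singularity** (Theorem 6.1 (i) ⇔ (vii), Hilbert space case).
`A ⊥ B` iff for every `x` there is a sequence `(xₙ)` with `⟨A xₙ, xₙ⟩ → 0` and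
`⟨B(x − xₙ), x − xₙ⟩ → 0`. -/
theorem stmt_14 (A B : H →L[ℂ] H) (hA : A.IsPositive) (hB : B.IsPositive) :
    MutSing A B ↔
      ∀ x : H, ∃ s : ℕ → H,
        Tendsto (fun n => (⟪A (s n), s n⟫).re) atTop (nhds 0) ∧
        Tendsto (fun n => (⟪B (x - s n), x - s n⟫).re) atTop (nhds 0) := by
  refine ⟨fun hsing => ?_, fun hseq C hC hCA hCB => ?_⟩
  · exact exists_seq_of_parallelSum_eq_zero hA hB <| hsing _ (isPositive_parallelSum A B)
      (quadLE_parallelSum_left hA hB) (quadLE_parallelSum_right hA hB)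
  · exact eq_zero_of_quadLE_of_forall_exists_seq hA hB hC hCA hCB hseq
end

section
/- Let A, B be bounded positive operators on a complex Hilbert space H with B ≪ A, and suppose there is no constant α ≥ 0 with B ≤ αA. Then there exists a nonzero bounded positive operator B′ with B′ ≤ B and B′ ⊥ A. -/
/-!
Write `B = R* R` and `A = S* S`, so that `B ≤ α A` says `‖R x‖ ≤ √α ‖S x‖`. If no such bound
holds, the uniform boundedness principle, applied to the functionals `⟪R x, ·⟫` indexed by the
`S`-unit ball `{x | ‖S x‖ ≤ 1}`, gives a vector `‖v‖ ≤ 1` for which already the single functional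
`x ↦ ⟪v, R x⟫ = ⟪R* v, x⟫` is not bounded by `‖S x‖`. The rank-one operator `B' x = ⟪w, x⟫ w` with
`w = R* v` then satisfies `B' ≤ B` by Cauchy–Schwarz. A positive `C ≤ B'` vanishes on `w⊥`, so
`⟪C x, x⟫ = c |⟪w, x⟫|²` for a constant `c ≥ 0`; if also `C ≤ A`, then `c > 0` would bound
`|⟪w, x⟫|²` by a multiple of `⟪A x, x⟫`, hence `c = 0` and `C = 0`.
-/

open Filter

local notation "⟪" x ", " y "⟫" => @inner ℂ _ _ x y

variable {H : Type*} [NormedAddCommGroup H] [InnerProductSpace ℂ H] [CompleteSpace H]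

open Asymptotics InnerProductSpace ContinuousLinearMap Topology

section Domination

variable {ι E F : Type*} [SeminormedAddCommGroup E] [SeminormedAddCommGroup F]

lemma isBigO_top_iff_exists_sq_le {f : ι → E} {g : ι → F} :
    f =O[⊤] g ↔ ∃ α : ℝ, 0 ≤ α ∧ ∀ x, ‖f x‖ ^ 2 ≤ α * ‖g x‖ ^ 2 := by
  rw [isBigO_top]
  constructor
  · rintro ⟨C, hC⟩
    refine ⟨C ^ 2, sq_nonneg C, fun x => ?_⟩
    have := pow_le_pow_left₀ (norm_nonneg _)
      ((hC x).trans (mul_le_mul_of_nonneg_right (le_abs_self C) (norm_nonneg _))) 2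
    rwa [mul_pow, sq_abs] at this
  · rintro ⟨α, -, hα⟩
    refine ⟨√α, fun x => ?_⟩
    calc ‖f x‖ = √(‖f x‖ ^ 2) := (Real.sqrt_sq (norm_nonneg _)).symm
      _ ≤ √(α * ‖g x‖ ^ 2) := Real.sqrt_le_sqrt (hα x)
      _ = √α * ‖g x‖ := by rw [Real.sqrt_mul' _ (sq_nonneg _), Real.sqrt_sq (norm_nonneg _)]

end Domination

section BanachSteinhaus

variable {𝕜 E F G : Type*} [RCLike 𝕜] [NormedAddCommGroup E] [NormedSpace 𝕜 E]
  [NormedAddCommGroup F] [NormedAddCommGroup G] [NormedSpace 𝕜 G]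

lemma isBigO_top_of_norm_le_one [NormedSpace 𝕜 F] {f : E →L[𝕜] F} {g : E →L[𝕜] G} {C : ℝ}
    (h : ∀ x, ‖g x‖ ≤ 1 → ‖f x‖ ≤ C) : f =O[⊤] g := by
  refine isBigO_top.2 ⟨C, fun x => ?_⟩
  have hlim : Tendsto (fun δ => C * δ) (𝓝[>] ‖g x‖) (𝓝 (C * ‖g x‖)) :=
    ((continuous_const_mul C).tendsto _).mono_left nhdsWithin_le_nhds
  refine ge_of_tendsto hlim ?_
  filter_upwards [self_mem_nhdsWithin] with δ (hδ : ‖g x‖ < δ)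
  have hδ0 : 0 < δ := (norm_nonneg _).trans_lt hδ
  have key := h ((δ : 𝕜)⁻¹ • x) (by
    rw [map_smul, norm_smul, norm_inv, RCLike.norm_ofReal, abs_of_pos hδ0]
    exact (inv_mul_le_one₀ hδ0).2 hδ.le)
  rw [map_smul, norm_smul, norm_inv, RCLike.norm_ofReal, abs_of_pos hδ0,
    inv_mul_le_iff₀ hδ0] at key
  simpa only [mul_comm] using key

lemma exists_norm_le_one_not_isBigO_inner [InnerProductSpace 𝕜 F] [CompleteSpace F]
    (R : E →L[𝕜] F) (S : E →L[𝕜] G) (h : ¬ R =O[⊤] S) :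
    ∃ v : F, ‖v‖ ≤ 1 ∧ ¬ (fun x => inner 𝕜 (R x) v) =O[⊤] S := by
  by_contra! hbdd
  refine h ?_
  have hall : ∀ v, (fun x => inner 𝕜 (R x) v) =O[⊤] S := by
    intro v
    have hv : 0 < ‖v‖ + 1 := by positivity
    set c : 𝕜 := ((‖v‖ + 1 : ℝ) : 𝕜)
    have hc : c ≠ 0 := RCLike.ofReal_ne_zero.2 hv.ne'
    refine ((hbdd (c⁻¹ • v) ?_).const_mul_left c).congr_left fun x => ?_
    · rw [norm_smul, norm_inv, RCLike.norm_ofReal, abs_of_pos hv, inv_mul_le_one₀ hv]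
      linarith
    · rw [inner_smul_right, mul_inv_cancel_left₀ hc]
  have hpt : ∀ v, ∃ C, ∀ i : {x // ‖S x‖ ≤ 1}, ‖innerSL 𝕜 (R i) v‖ ≤ C := by
    intro v
    obtain ⟨C, hC, hCv⟩ := (hall v).exists_pos
    exact ⟨C, fun i => (isBigOWith_top.1 hCv i).trans (mul_le_of_le_one_right hC.le i.2)⟩
  obtain ⟨C, hC⟩ := banach_steinhaus hpt
  exact isBigO_top_of_norm_le_one fun x hx => by simpa only [innerSL_apply_norm] using hC ⟨x, hx⟩

end BanachSteinhaus

section Operators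

variable {E : Type*} [NormedAddCommGroup E] [InnerProductSpace ℂ E]

lemma re_inner_rankOne_self (w x : E) : (⟪rankOne ℂ w w x, x⟫).re = ‖⟪w, x⟫‖ ^ 2 := by
  rw [rankOne_apply, inner_smul_left, RCLike.conj_mul]
  norm_cast

lemma re_inner_apply_self_of_apply_eq_smul {C : E →L[ℂ] E} (hC : C.IsSymmetric)
    {x w : E} {a : ℂ} (h : C x = a • C w) : (⟪C x, x⟫).re = ‖a‖ ^ 2 * (⟪C w, w⟫).re := by
  have hsym (u v : E) : ⟪C u, v⟫ = ⟪u, C v⟫ := hC u v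
  have : ⟪C x, x⟫ = ((‖a‖ ^ 2 : ℝ) : ℂ) * ⟪C w, w⟫ := by
    calc ⟪C x, x⟫ = (starRingEnd ℂ) a * ⟪C w, x⟫ := by rw [h, inner_smul_left]
      _ = (starRingEnd ℂ) a * ⟪w, C x⟫ := by rw [hsym]
      _ = ((‖a‖ ^ 2 : ℝ) : ℂ) * ⟪C w, w⟫ := by
        rw [h, inner_smul_right, ← mul_assoc, RCLike.conj_mul, ← hsym w w]
        push_cast; rfl
  rw [this, Complex.re_ofReal_mul]

variable [CompleteSpace E]

lemma ContinuousLinearMap.IsPositive.exists_eq_adjoint_comp_self {T : E →L[ℂ] E}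
    (hT : T.IsPositive) : ∃ R : E →L[ℂ] E, T = adjoint R ∘L R := by
  obtain ⟨R, hR⟩ := CStarAlgebra.nonneg_iff_eq_star_mul_self.1 ((nonneg_iff_isPositive T).2 hT)
  exact ⟨R, hR⟩

lemma re_inner_adjoint_comp_self_apply (R : E →L[ℂ] E) (x : E) :
    (⟪(adjoint R ∘L R) x, x⟫).re = ‖R x‖ ^ 2 :=
  (apply_norm_sq_eq_inner_adjoint_left R x).symm

lemma ContinuousLinearMap.IsPositive.apply_eq_zero_of_re_inner_eq_zero {T : E →L[ℂ] E}
    (hT : T.IsPositive) {x : E} (hx : (⟪T x, x⟫).re = 0) : T x = 0 := by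
  obtain ⟨R, rfl⟩ := hT.exists_eq_adjoint_comp_self
  rw [re_inner_adjoint_comp_self_apply, sq_eq_zero_iff, norm_eq_zero] at hx
  simp [hx]

lemma apply_eq_smul_apply_of_quadLE_rankOne {C : E →L[ℂ] E} (hC : C.IsPositive) {w : E}
    (hCw : QuadLE C (rankOne ℂ w w)) (x : E) :
    C x = (⟪w, x⟫ / ((‖w‖ ^ 2 : ℝ) : ℂ)) • C w := by
  have horth : ⟪w, x - (Submodule.span ℂ {w}).starProjection x⟫ = 0 :=
    Submodule.mem_orthogonal_singleton_iff_inner_right.1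
      (Submodule.sub_starProjection_mem_orthogonal x)
  have hker : C (x - (Submodule.span ℂ {w}).starProjection x) = 0 := by
    refine hC.apply_eq_zero_of_re_inner_eq_zero (le_antisymm ?_ (hC.re_inner_nonneg_left _))
    simpa [re_inner_rankOne_self, horth] using hCw (x - (Submodule.span ℂ {w}).starProjection x)
  rwa [map_sub, sub_eq_zero, Submodule.starProjection_singleton, map_smul] at hker

lemma mutSing_rankOne_self {A : E →L[ℂ] E} {w : E}
    (hw : ¬ ∃ α : ℝ, 0 ≤ α ∧ ∀ x, ‖⟪w, x⟫‖ ^ 2 ≤ α * (⟪A x, x⟫).re) :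
    MutSing (rankOne ℂ w w) A := by
  intro C hC hCw hCA
  have hw0 : w ≠ 0 := by
    rintro rfl
    exact hw ⟨0, le_rfl, by simp⟩
  have hCx := apply_eq_smul_apply_of_quadLE_rankOne hC hCw
  have hform (x : E) : (⟪C x, x⟫).re = ‖⟪w, x⟫‖ ^ 2 / ‖w‖ ^ 4 * (⟪C w, w⟫).re := by
    rw [re_inner_apply_self_of_apply_eq_smul hC.isSymmetric (hCx x), norm_div,
      Complex.norm_real, Real.norm_of_nonneg (by positivity)]
    ring
  rcases (hC.re_inner_nonneg_left w).eq_or_lt with ht | ht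
  · have hCw0 : C w = 0 := hC.apply_eq_zero_of_re_inner_eq_zero ht.symm
    ext x
    simp [hCx x, hCw0]
  · change 0 < (⟪C w, w⟫).re at ht
    refine absurd ⟨‖w‖ ^ 4 / (⟪C w, w⟫).re, by positivity, fun x => ?_⟩ hw
    have := hCA x
    rw [hform] at this
    calc ‖⟪w, x⟫‖ ^ 2
        = ‖w‖ ^ 4 / (⟪C w, w⟫).re * (‖⟪w, x⟫‖ ^ 2 / ‖w‖ ^ 4 * (⟪C w, w⟫).re) := by field_simp
      _ ≤ _ := mul_le_mul_of_nonneg_left this (by positivity)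

end Operators

theorem stmt_15_general (A B : H →L[ℂ] H) (hA : A.IsPositive) (hB : B.IsPositive)
    (hnotdom : ¬ ∃ α : ℝ, 0 ≤ α ∧ ∀ x : H, (⟪B x, x⟫).re ≤ α * (⟪A x, x⟫).re) :
    ∃ B' : H →L[ℂ] H, B' ≠ 0 ∧ B'.IsPositive ∧ QuadLE B' B ∧ MutSing B' A := by
  obtain ⟨R, rfl⟩ := hB.exists_eq_adjoint_comp_self
  obtain ⟨S, rfl⟩ := hA.exists_eq_adjoint_comp_self
  have hRS : ¬ R =O[⊤] S := by
    simpa only [isBigO_top_iff_exists_sq_le, re_inner_adjoint_comp_self_apply] using hnotdom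
  obtain ⟨v, hv, hvS⟩ := exists_norm_le_one_not_isBigO_inner R S hRS
  set w := adjoint R v
  have hw (x : H) : ⟪w, x⟫ = ⟪v, R x⟫ := adjoint_inner_left R x v
  have hwS : ¬ ∃ α : ℝ, 0 ≤ α ∧ ∀ x, ‖⟪w, x⟫‖ ^ 2 ≤ α * (⟪(adjoint S ∘L S) x, x⟫).re := by
    simpa only [isBigO_top_iff_exists_sq_le, re_inner_adjoint_comp_self_apply, hw,
      norm_inner_symm v] using hvS
  have hw0 : w ≠ 0 := by
    rintro h
    exact hwS ⟨0, le_rfl, by simp [h]⟩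
  refine ⟨rankOne ℂ w w, fun h => hw0 ?_, isPositive_rankOne_self w, fun x => ?_,
    mutSing_rankOne_self hwS⟩
  · simpa using congrArg norm h
  · rw [re_inner_rankOne_self, re_inner_adjoint_comp_self_apply, hw]
    have := (norm_inner_le_norm (𝕜 := ℂ) v (R x)).trans (mul_le_of_le_one_left (norm_nonneg _) hv)
    exact pow_le_pow_left₀ (norm_nonneg _) this 2

/-- **Absolute continuity is not hereditary** (Proposition 7.1, Hilbert space case). If
`B ≪ A` but `B` is not dominated by any multiple `αA` of `A`, then there is a nonzero
positive operator `B′ ≤ B` with `B′ ⊥ A`. -/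
theorem stmt_15 (A B : H →L[ℂ] H) (hA : A.IsPositive) (hB : B.IsPositive)
    (hac : AbsCont B A)
    (hnotdom : ¬ ∃ α : ℝ, 0 ≤ α ∧ ∀ x : H, (⟪B x, x⟫).re ≤ α * (⟪A x, x⟫).re) :
    ∃ B' : H →L[ℂ] H, B' ≠ 0 ∧ B'.IsPositive ∧ QuadLE B' B ∧ MutSing B' A :=
  stmt_15_general A B hA hB hnotdom
end

section
/- Let t and w be nonnegative Hermitian sesquilinear forms on a complex vector space D. If t is w-almost dominated (i.e., there exist nonnegative Hermitian forms tₙ with tₙ ≤ tₙ₊₁ ≤ t, tₙ ≤ αₙ w for some αₙ ≥ 0, and tₙ(x,x) → t(x,x) for all x), then t is w-closable: for every sequence (xₙ) in D with w(xₙ,xₙ) → 0 and t(xₙ−xₘ, xₙ−xₘ) → 0 one has t(xₙ,xₙ) → 0. -/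
/-!
Each `tₙ` is a nonnegative Hermitian form, so `x ↦ √(tₙ(x,x))` is a seminorm. Fix `n` large
and `k`. Since `0 ≤ tₖ ≤ αₖ w` and `w(xₘ,xₘ) → 0`, also `tₖ(xₘ,xₘ) → 0`, and the triangle
inequality `√tₖ(xₙ) ≤ √tₖ(xₙ - xₘ) + √tₖ(xₘ) ≤ √t(xₙ - xₘ) + √tₖ(xₘ)` gives, as `m → ∞`,
`tₖ(xₙ,xₙ) ≤ ε` whenever `t(xₙ - xₘ, xₙ - xₘ) < ε` for all large `m`. Letting `k → ∞` yields
`t(xₙ,xₙ) ≤ ε`.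
-/

open Filter Topology

section SesquilinearForm

variable {D : Type*} [AddCommGroup D] [Module ℂ D]

theorem sqrt_re_form_add_le (s : D →ₗ⋆[ℂ] D →ₗ[ℂ] ℂ)
    (hs_herm : ∀ x y, s x y = star (s y x)) (hs_pos : ∀ x, 0 ≤ (s x x).re) (x y : D) :
    √(s (x + y) (x + y)).re ≤ √(s x x).re + √(s y y).re :=
  letI : PreInnerProductSpace.Core ℂ D :=
    { inner x y := s x y
      conj_inner_symm x y := (hs_herm x y).symm
      re_inner_nonneg := hs_pos
      add_left x y z := by simp
      smul_left x y r := by simp }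
  letI := InnerProductSpace.Core.toSeminormedAddCommGroup (𝕜 := ℂ) (F := D)
  norm_add_le x y

theorem tendsto_re_form_of_le_mul {s w : D →ₗ⋆[ℂ] D →ₗ[ℂ] ℂ} {α : ℝ}
    (hs_pos : ∀ x, 0 ≤ (s x x).re) (hdom : ∀ x, (s x x).re ≤ α * (w x x).re)
    {x : ℕ → D} (hw : Tendsto (fun m => (w (x m) (x m)).re) atTop (𝓝 0)) :
    Tendsto (fun m => (s (x m) (x m)).re) atTop (𝓝 0) :=
  tendsto_of_tendsto_of_tendsto_of_le_of_le tendsto_const_nhds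
    (by simpa using hw.const_mul α) (fun m => hs_pos (x m)) (fun m => hdom (x m))

theorem re_form_le_of_eventually_le {s : D →ₗ⋆[ℂ] D →ₗ[ℂ] ℂ}
    (hs_herm : ∀ x y, s x y = star (s y x)) (hs_pos : ∀ x, 0 ≤ (s x x).re)
    {x : ℕ → D} (hx : Tendsto (fun m => (s (x m) (x m)).re) atTop (𝓝 0)) {y : D} {c : ℝ}
    (hc : ∀ᶠ m in atTop, (s (y - x m) (y - x m)).re ≤ c) :
    (s y y).re ≤ c := by
  obtain ⟨m, hm⟩ := hc.exists
  have hc_nonneg : 0 ≤ c := (hs_pos _).trans hm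
  have hlim : Tendsto (fun m => √c + √(s (x m) (x m)).re) atTop (𝓝 (√c)) := by
    simpa using hx.sqrt.const_add √c
  have hsqrt : √(s y y).re ≤ √c := by
    refine ge_of_tendsto hlim (hc.mono fun m hm => ?_)
    calc √(s y y).re
        ≤ √(s (y - x m) (y - x m)).re + √(s (x m) (x m)).re := by
          simpa using sqrt_re_form_add_le s hs_herm hs_pos (y - x m) (x m)
      _ ≤ √c + √(s (x m) (x m)).re := by gcongr
  exact (Real.sqrt_le_sqrt_iff hc_nonneg).1 hsqrt

end SesquilinearForm

theorem stmt_17_general {D : Type*} [AddCommGroup D] [Module ℂ D]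
    (t w : D →ₗ⋆[ℂ] D →ₗ[ℂ] ℂ)
    (ht_pos : ∀ x : D, 0 ≤ (t x x).re)
    (tn : ℕ → D →ₗ⋆[ℂ] D →ₗ[ℂ] ℂ) (α : ℕ → ℝ)
    (htn_herm : ∀ n, ∀ x y : D, tn n x y = star (tn n y x))
    (htn_pos : ∀ n, ∀ x : D, 0 ≤ (tn n x x).re)
    (hle_t : ∀ n, ∀ x : D, (tn n x x).re ≤ (t x x).re)
    (hdom : ∀ n, ∀ x : D, (tn n x x).re ≤ α n * (w x x).re)
    (hlim : ∀ x : D, Tendsto (fun n => (tn n x x).re) atTop (nhds ((t x x).re))) :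
    ∀ x : ℕ → D,
      Tendsto (fun n => (w (x n) (x n)).re) atTop (nhds 0) →
      (∀ ε > (0 : ℝ), ∃ N : ℕ, ∀ n ≥ N, ∀ m ≥ N,
        (t (x n - x m) (x n - x m)).re < ε) →
      Tendsto (fun n => (t (x n) (x n)).re) atTop (nhds 0) := by
  intro x hw hcauchy
  have hsmall : ∀ ε > 0, ∀ᶠ n in atTop, (t (x n) (x n)).re ≤ ε := by
    intro ε hε
    obtain ⟨N, hN⟩ := hcauchy ε hε
    filter_upwards [eventually_ge_atTop N] with n hn
    refine le_of_tendsto' (hlim (x n)) fun k => ?_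
    refine re_form_le_of_eventually_le (htn_herm k) (htn_pos k)
      (tendsto_re_form_of_le_mul (htn_pos k) (hdom k) hw) ?_
    filter_upwards [eventually_ge_atTop N] with m hm
    exact (hle_t k _).trans (hN n hn m hm).le
  refine tendsto_order.2 ⟨fun a ha => Eventually.of_forall fun n => ha.trans_le (ht_pos _),
    fun ε hε => ?_⟩
  exact (hsmall (ε / 2) (half_pos hε)).mono fun n hn => hn.trans_lt (half_lt_self hε)

/-- **Almost dominated forms are closable** (Section 8.2; cf. Theorem 5.1). Let `t`, `w` be
nonnegative Hermitian sesquilinear forms on a complex vector space `D` (conjugate-linear in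
the first variable). If `t` is `w`-almost dominated, i.e. there are nonnegative Hermitian
forms `tₙ` with `tₙ ≤ tₙ₊₁ ≤ t`, `tₙ ≤ αₙ w` for some `αₙ ≥ 0`, and `tₙ(x,x) → t(x,x)` for
every `x`, then `t` is `w`-closable: `w(xₙ,xₙ) → 0` and `t(xₙ−xₘ, xₙ−xₘ) → 0` imply
`t(xₙ,xₙ) → 0`. -/
theorem stmt_17 {D : Type*} [AddCommGroup D] [Module ℂ D]
    (t w : D →ₗ⋆[ℂ] D →ₗ[ℂ] ℂ)
    (ht_herm : ∀ x y : D, t x y = star (t y x)) (ht_pos : ∀ x : D, 0 ≤ (t x x).re)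
    (hw_herm : ∀ x y : D, w x y = star (w y x)) (hw_pos : ∀ x : D, 0 ≤ (w x x).re)
    (tn : ℕ → D →ₗ⋆[ℂ] D →ₗ[ℂ] ℂ) (α : ℕ → ℝ)
    (htn_herm : ∀ n, ∀ x y : D, tn n x y = star (tn n y x))
    (htn_pos : ∀ n, ∀ x : D, 0 ≤ (tn n x x).re)
    (hα : ∀ n, 0 ≤ α n)
    (hmono : ∀ n, ∀ x : D, (tn n x x).re ≤ (tn (n + 1) x x).re)
    (hle_t : ∀ n, ∀ x : D, (tn n x x).re ≤ (t x x).re)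
    (hdom : ∀ n, ∀ x : D, (tn n x x).re ≤ α n * (w x x).re)
    (hlim : ∀ x : D, Tendsto (fun n => (tn n x x).re) atTop (nhds ((t x x).re))) :
    ∀ x : ℕ → D,
      Tendsto (fun n => (w (x n) (x n)).re) atTop (nhds 0) →
      (∀ ε > (0 : ℝ), ∃ N : ℕ, ∀ n ≥ N, ∀ m ≥ N,
        (t (x n - x m) (x n - x m)).re < ε) →
      Tendsto (fun n => (t (x n) (x n)).re) atTop (nhds 0) :=
  stmt_17_general t w ht_pos tn α htn_herm htn_pos hle_t hdom hlim
end

section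
/- Let X be a nonempty set, R an algebra of subsets of X, and α, β : R → ℝ≥0 finitely additive set functions. Then there exist finitely additive set functions β_a, β_s : R → ℝ≥0 with β = β_a + β_s, such that β_a is absolutely continuous with respect to α (for every ε > 0 there is δ > 0 with α(R) < δ implying β_a(R) < ε) and β_s is singular with respect to α (the only finitely additive nonnegative set function γ with γ ≤ α and γ ≤ β_s is γ = 0). -/
/-- `f` is a nonnegative finitely additive set function on the algebra of sets `R`. -/
def IsFinAdd {X : Type*} (R : Set (Set X)) (f : Set X → ℝ) : Prop :=
  (∀ s ∈ R, 0 ≤ f s) ∧ ∀ s ∈ R, ∀ t ∈ R, Disjoint s t → f (s ∪ t) = f s + f t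

open Set

set_option linter.unusedSectionVars false
namespace LebAux

variable {X : Type*} {R : Set (Set X)}

theorem finadd_empty {f : Set X → ℝ} (hf : IsFinAdd R f) (hempty : ∅ ∈ R) : f ∅ = 0 := by
  have := hf.2 ∅ hempty ∅ hempty (by simp)
  simp at this
  linarith

theorem inter_mem (hcompl : ∀ s ∈ R, sᶜ ∈ R) (hunion : ∀ s ∈ R, ∀ t ∈ R, s ∪ t ∈ R)
    {s t : Set X} (hs : s ∈ R) (ht : t ∈ R) : s ∩ t ∈ R := by
  have : s ∩ t = (sᶜ ∪ tᶜ)ᶜ := by ext x; simp only [mem_inter_iff, mem_compl_iff, mem_union]; tauto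
  rw [this]
  exact hcompl _ (hunion _ (hcompl _ hs) _ (hcompl _ ht))

theorem diff_mem (hcompl : ∀ s ∈ R, sᶜ ∈ R) (hunion : ∀ s ∈ R, ∀ t ∈ R, s ∪ t ∈ R)
    {s t : Set X} (hs : s ∈ R) (ht : t ∈ R) : s \ t ∈ R := by
  have : s \ t = s ∩ tᶜ := rfl
  rw [this]
  exact inter_mem hcompl hunion hs (hcompl _ ht)

theorem univ_mem (hempty : ∅ ∈ R) (hcompl : ∀ s ∈ R, sᶜ ∈ R) : (univ : Set X) ∈ R := by
  have : (univ : Set X) = (∅ : Set X)ᶜ := by simp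
  rw [this]; exact hcompl _ hempty

theorem finadd_mono {f : Set X → ℝ} (hf : IsFinAdd R f)
    (hcompl : ∀ s ∈ R, sᶜ ∈ R) (hunion : ∀ s ∈ R, ∀ t ∈ R, s ∪ t ∈ R)
    {s t : Set X} (hs : s ∈ R) (ht : t ∈ R) (hst : s ⊆ t) : f s ≤ f t := by
  have hd : t = s ∪ (t \ s) := by rw [union_diff_cancel hst]
  have := hf.2 s hs (t \ s) (diff_mem hcompl hunion ht hs) disjoint_sdiff_right
  rw [← hd] at this
  have h0 := hf.1 (t \ s) (diff_mem hcompl hunion ht hs)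
  linarith

/-- The set over which we take the infimum defining `β ∧ n • α`. -/
def gset (R : Set (Set X)) (α β : Set X → ℝ) (n : ℕ) (E : Set X) : Set ℝ :=
  {x | ∃ F ∈ R, F ⊆ E ∧ x = β F + n * α (E \ F)}

/-- The lattice infimum `(β ∧ n • α)(E)`. -/
noncomputable def g (R : Set (Set X)) (α β : Set X → ℝ) (n : ℕ) (E : Set X) : ℝ :=
  sInf (gset R α β n E)

variable (hempty : ∅ ∈ R) (hcompl : ∀ s ∈ R, sᶜ ∈ R)
  (hunion : ∀ s ∈ R, ∀ t ∈ R, s ∪ t ∈ R)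
  {α β : Set X → ℝ} (hα : IsFinAdd R α) (hβ : IsFinAdd R β)

include hempty hcompl hunion hα hβ

theorem gset_nonempty (n : ℕ) {E : Set X} (hE : E ∈ R) : (gset R α β n E).Nonempty :=
  ⟨β E + n * α (E \ E), E, hE, subset_rfl, rfl⟩

theorem gset_nonneg (n : ℕ) {E : Set X} (hE : E ∈ R) :
    ∀ x ∈ gset R α β n E, (0 : ℝ) ≤ x := by
  rintro x ⟨F, hF, hFE, rfl⟩
  have h1 := hβ.1 F hF
  have h2 := hα.1 (E \ F) (diff_mem hcompl hunion hE hF)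
  positivity

theorem gset_bddBelow (n : ℕ) {E : Set X} (hE : E ∈ R) : BddBelow (gset R α β n E) :=
  ⟨0, gset_nonneg hempty hcompl hunion hα hβ n hE⟩

theorem g_nonneg (n : ℕ) {E : Set X} (hE : E ∈ R) : 0 ≤ g R α β n E :=
  le_csInf (gset_nonempty hempty hcompl hunion hα hβ n hE)
    (gset_nonneg hempty hcompl hunion hα hβ n hE)

theorem g_le (n : ℕ) {E F : Set X} (hE : E ∈ R) (hF : F ∈ R) (hFE : F ⊆ E) :
    g R α β n E ≤ β F + n * α (E \ F) :=
  csInf_le (gset_bddBelow hempty hcompl hunion hα hβ n hE) ⟨F, hF, hFE, rfl⟩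

theorem g_le_beta (n : ℕ) {E : Set X} (hE : E ∈ R) : g R α β n E ≤ β E := by
  have := g_le hempty hcompl hunion hα hβ n hE hE subset_rfl
  rw [diff_self, finadd_empty hα hempty] at this
  linarith

theorem g_le_nalpha (n : ℕ) {E : Set X} (hE : E ∈ R) : g R α β n E ≤ n * α E := by
  have := g_le hempty hcompl hunion hα hβ n hE hempty (empty_subset E)
  rw [diff_empty, finadd_empty hβ hempty] at this
  linarith

/-- Any finitely additive lower bound of `β` and `n • α` is below `g n`. -/
theorem le_g {ρ : Set X → ℝ} (hρ : IsFinAdd R ρ) (hρβ : ∀ s ∈ R, ρ s ≤ β s)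
    (hρα : ∀ s ∈ R, ρ s ≤ (n : ℕ) * α s) {E : Set X} (hE : E ∈ R) :
    ρ E ≤ g R α β n E := by
  apply le_csInf (gset_nonempty hempty hcompl hunion hα hβ n hE)
  rintro x ⟨F, hF, hFE, rfl⟩
  have hEF : E \ F ∈ R := diff_mem hcompl hunion hE hF
  have hsplit : ρ E = ρ F + ρ (E \ F) := by
    have := hρ.2 F hF (E \ F) hEF disjoint_sdiff_right
    rw [union_diff_cancel hFE] at this
    exact this
  have h1 := hρβ F hF
  have h2 := hρα (E \ F) hEF
  linarith

theorem g_mono (n : ℕ) {E : Set X} (hE : E ∈ R) : g R α β n E ≤ g R α β (n + 1) E := by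
  apply le_csInf (gset_nonempty hempty hcompl hunion hα hβ (n + 1) hE)
  rintro x ⟨F, hF, hFE, rfl⟩
  have h1 := g_le hempty hcompl hunion hα hβ n hE hF hFE
  have h2 := hα.1 (E \ F) (diff_mem hcompl hunion hE hF)
  push_cast
  nlinarith

theorem g_add (n : ℕ) {E₁ E₂ : Set X} (h₁ : E₁ ∈ R) (h₂ : E₂ ∈ R) (hd : Disjoint E₁ E₂) :
    g R α β n (E₁ ∪ E₂) = g R α β n E₁ + g R α β n E₂ := by
  have hE : E₁ ∪ E₂ ∈ R := hunion _ h₁ _ h₂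
  apply le_antisymm
  · -- g(E₁ ∪ E₂) ≤ g E₁ + g E₂
    have key : ∀ a ∈ gset R α β n E₁, ∀ b ∈ gset R α β n E₂,
        g R α β n (E₁ ∪ E₂) ≤ a + b := by
      rintro a ⟨F₁, hF₁, hF₁E, rfl⟩ b ⟨F₂, hF₂, hF₂E, rfl⟩
      have hFd : Disjoint F₁ F₂ := hd.mono hF₁E hF₂E
      have hFu : F₁ ∪ F₂ ∈ R := hunion _ hF₁ _ hF₂
      have hsub : F₁ ∪ F₂ ⊆ E₁ ∪ E₂ := union_subset_union hF₁E hF₂E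
      have hdiff : (E₁ ∪ E₂) \ (F₁ ∪ F₂) = (E₁ \ F₁) ∪ (E₂ \ F₂) := by
        ext x
        simp only [mem_diff, mem_union]
        constructor
        · rintro ⟨h | h, hn⟩
          · exact Or.inl ⟨h, fun hx => hn (Or.inl hx)⟩
          · exact Or.inr ⟨h, fun hx => hn (Or.inr hx)⟩
        · rintro (⟨h, hn⟩ | ⟨h, hn⟩)
          · refine ⟨Or.inl h, ?_⟩
            rintro (hx | hx)
            · exact hn hx
            · exact (Set.disjoint_left.mp hd h) (hF₂E hx)
          · refine ⟨Or.inr h, ?_⟩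
            rintro (hx | hx)
            · exact (Set.disjoint_right.mp hd h) (hF₁E hx)
            · exact hn hx
      have hddiff : Disjoint (E₁ \ F₁) (E₂ \ F₂) :=
        hd.mono diff_subset diff_subset
      have hβsplit := hβ.2 F₁ hF₁ F₂ hF₂ hFd
      have hαsplit := hα.2 (E₁ \ F₁) (diff_mem hcompl hunion h₁ hF₁)
        (E₂ \ F₂) (diff_mem hcompl hunion h₂ hF₂) hddiff
      have := g_le hempty hcompl hunion hα hβ n hE hFu hsub
      rw [hdiff, hβsplit, hαsplit] at this
      linarith
    -- now pass to infima
    have step1 : ∀ b ∈ gset R α β n E₂, g R α β n (E₁ ∪ E₂) - b ≤ g R α β n E₁ := by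
      intro b hb
      apply le_csInf (gset_nonempty hempty hcompl hunion hα hβ n h₁)
      intro a ha
      have := key a ha b hb
      linarith
    have step2 : g R α β n (E₁ ∪ E₂) - g R α β n E₁ ≤ g R α β n E₂ := by
      apply le_csInf (gset_nonempty hempty hcompl hunion hα hβ n h₂)
      intro b hb
      have := step1 b hb
      linarith
    linarith
  · -- g E₁ + g E₂ ≤ g(E₁ ∪ E₂)
    apply le_csInf (gset_nonempty hempty hcompl hunion hα hβ n hE)
    rintro x ⟨F, hF, hFE, rfl⟩
    set F₁ := F ∩ E₁ with hF₁def
    set F₂ := F ∩ E₂ with hF₂def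
    have hF₁ : F₁ ∈ R := inter_mem hcompl hunion hF h₁
    have hF₂ : F₂ ∈ R := inter_mem hcompl hunion hF h₂
    have hF₁E : F₁ ⊆ E₁ := inter_subset_right
    have hF₂E : F₂ ⊆ E₂ := inter_subset_right
    have hFsplit : F = F₁ ∪ F₂ := by
      rw [hF₁def, hF₂def, ← inter_union_distrib_left]
      exact (inter_eq_left.mpr hFE).symm
    have hFd : Disjoint F₁ F₂ := hd.mono hF₁E hF₂E
    have hdiff1 : E₁ \ F = E₁ \ F₁ := by
      rw [hF₁def]
      ext x; simp only [mem_diff, mem_inter_iff]; tauto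
    have hdiff2 : E₂ \ F = E₂ \ F₂ := by
      rw [hF₂def]
      ext x; simp only [mem_diff, mem_inter_iff]; tauto
    have hdiff : (E₁ ∪ E₂) \ F = (E₁ \ F₁) ∪ (E₂ \ F₂) := by
      rw [union_diff_distrib, hdiff1, hdiff2]
    have hddiff : Disjoint (E₁ \ F₁) (E₂ \ F₂) := hd.mono diff_subset diff_subset
    have hβsplit : β F = β F₁ + β F₂ := by
      rw [hFsplit]; exact hβ.2 F₁ hF₁ F₂ hF₂ hFd
    have hαsplit : α ((E₁ ∪ E₂) \ F) = α (E₁ \ F₁) + α (E₂ \ F₂) := by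
      rw [hdiff]
      exact hα.2 _ (diff_mem hcompl hunion h₁ hF₁) _ (diff_mem hcompl hunion h₂ hF₂) hddiff
    have hle1 := g_le hempty hcompl hunion hα hβ n h₁ hF₁ hF₁E
    have hle2 := g_le hempty hcompl hunion hα hβ n h₂ hF₂ hF₂E
    rw [hβsplit, hαsplit]
    linarith

end LebAux

open LebAux Filter in
/-- **Lebesgue decomposition of finitely additive set functions** (Theorem 8.5). For
nonnegative finitely additive set functions `α`, `β` on an algebra of sets `R` over a
nonempty set `X`, there exist nonnegative finitely additive `β_a`, `β_s` with
`β = β_a + β_s` on `R`, `β_a` absolutely continuous with respect to `α` (ε–δ sense), and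
`β_s` singular with respect to `α` (any nonnegative finitely additive `γ ≤ α`, `γ ≤ β_s`
vanishes on `R`). -/
theorem stmt_18 {X : Type*} [Nonempty X] (R : Set (Set X))
    (hempty : ∅ ∈ R) (hcompl : ∀ s ∈ R, sᶜ ∈ R) (hunion : ∀ s ∈ R, ∀ t ∈ R, s ∪ t ∈ R)
    (α β : Set X → ℝ) (hα : IsFinAdd R α) (hβ : IsFinAdd R β) :
    ∃ βa βs : Set X → ℝ, IsFinAdd R βa ∧ IsFinAdd R βs ∧
      (∀ s ∈ R, β s = βa s + βs s) ∧
      (∀ ε > (0 : ℝ), ∃ δ > (0 : ℝ), ∀ s ∈ R, α s < δ → βa s < ε) ∧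
      (∀ γ : Set X → ℝ, IsFinAdd R γ → (∀ s ∈ R, γ s ≤ α s) → (∀ s ∈ R, γ s ≤ βs s) →
        ∀ s ∈ R, γ s = 0) := by
  classical
  set βa : Set X → ℝ := fun E => ⨆ n : ℕ, g R α β n E with hβa_def
  set βs : Set X → ℝ := fun E => β E - βa E with hβs_def
  -- basic facts about g
  have hgmono : ∀ {E : Set X}, E ∈ R → Monotone (fun n : ℕ => g R α β n E) := by
    intro E hE
    exact monotone_nat_of_le_succ fun n => g_mono hempty hcompl hunion hα hβ n hE
  have hgbdd : ∀ {E : Set X}, E ∈ R → BddAbove (Set.range fun n : ℕ => g R α β n E) := by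
    intro E hE
    exact ⟨β E, by rintro x ⟨n, rfl⟩; exact g_le_beta hempty hcompl hunion hα hβ n hE⟩
  have htend : ∀ {E : Set X}, E ∈ R →
      Tendsto (fun n : ℕ => g R α β n E) atTop (nhds (βa E)) := by
    intro E hE
    exact tendsto_atTop_ciSup (hgmono hE) (hgbdd hE)
  have hg_le_βa : ∀ (n : ℕ) {E : Set X}, E ∈ R → g R α β n E ≤ βa E := by
    intro n E hE
    exact le_ciSup (hgbdd hE) n
  have hβa_nonneg : ∀ {E : Set X}, E ∈ R → 0 ≤ βa E := fun {E} hE =>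
    le_trans (g_nonneg hempty hcompl hunion hα hβ 0 hE) (hg_le_βa 0 hE)
  have hβa_le_β : ∀ {E : Set X}, E ∈ R → βa E ≤ β E := by
    intro E hE
    exact ciSup_le fun n => g_le_beta hempty hcompl hunion hα hβ n hE
  have hβa_add : ∀ s ∈ R, ∀ t ∈ R, Disjoint s t → βa (s ∪ t) = βa s + βa t := by
    intro s hs t ht hd
    have h1 : Tendsto (fun n : ℕ => g R α β n (s ∪ t)) atTop (nhds (βa (s ∪ t))) :=
      htend (hunion _ hs _ ht)
    have h2 : Tendsto (fun n : ℕ => g R α β n (s ∪ t)) atTop (nhds (βa s + βa t)) := by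
      have heq : (fun n : ℕ => g R α β n (s ∪ t)) =
          fun n : ℕ => g R α β n s + g R α β n t := by
        funext n
        exact g_add hempty hcompl hunion hα hβ n hs ht hd
      rw [heq]
      exact ((htend hs).add (htend ht))
    exact tendsto_nhds_unique h1 h2
  have hβaFA : IsFinAdd R βa := ⟨fun s hs => hβa_nonneg hs, hβa_add⟩
  have hβsFA : IsFinAdd R βs := by
    constructor
    · intro s hs
      have := hβa_le_β hs
      simp only [hβs_def]
      linarith
    · intro s hs t ht hd
      have h1 := hβ.2 s hs t ht hd
      have h2 := hβa_add s hs t ht hd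
      simp only [hβs_def]
      linarith
  refine ⟨βa, βs, hβaFA, hβsFA, ?_, ?_, ?_⟩
  · intro s hs
    simp only [hβs_def]
    ring
  · -- absolute continuity
    intro ε hε
    have huniv : (Set.univ : Set X) ∈ R := univ_mem hempty hcompl
    obtain ⟨N, hN⟩ := (Metric.tendsto_atTop.mp (htend huniv) (ε / 2) (by linarith))
    have hNle : βa Set.univ - g R α β N Set.univ < ε / 2 := by
      have := hN N le_rfl
      rw [Real.dist_eq, abs_sub_lt_iff] at this
      linarith [this.2]
    refine ⟨ε / (2 * (N + 1)), by positivity, ?_⟩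
    intro s hs hαs
    have hsc : sᶜ ∈ R := hcompl _ hs
    have hds : Disjoint s sᶜ := disjoint_compl_right
    have hcup : s ∪ sᶜ = Set.univ := Set.union_compl_self s
    -- βa - g N is "monotone": βa s - g N s ≤ βa univ - g N univ
    have hsplit1 : βa Set.univ = βa s + βa sᶜ := by
      rw [← hcup]; exact hβa_add s hs sᶜ hsc hds
    have hsplit2 : g R α β N Set.univ = g R α β N s + g R α β N sᶜ := by
      rw [← hcup]; exact g_add hempty hcompl hunion hα hβ N hs hsc hds
    have hpos : 0 ≤ βa sᶜ - g R α β N sᶜ := by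
      have := hg_le_βa N hsc; linarith
    have hkey : βa s ≤ g R α β N s + ε / 2 := by
      have : βa s - g R α β N s ≤ βa Set.univ - g R α β N Set.univ := by
        rw [hsplit1, hsplit2]; linarith
      linarith
    have hgN : g R α β N s ≤ N * α s := g_le_nalpha hempty hcompl hunion hα hβ N hs
    have hNa : (N : ℝ) * α s < ε / 2 := by
      have hα0 := hα.1 s hs
      have h1 : (N : ℝ) * α s ≤ N * (ε / (2 * (N + 1))) := by
        apply mul_le_mul_of_nonneg_left (le_of_lt hαs) (Nat.cast_nonneg N)
      have h2 : (N : ℝ) * (ε / (2 * (N + 1))) < ε / 2 := by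
        rw [← mul_div_assoc, div_lt_div_iff₀ (by positivity) (by norm_num : (0:ℝ) < 2)]
        nlinarith [Nat.cast_nonneg (α := ℝ) N]
      linarith
    linarith
  · -- singularity
    intro γ hγ hγα hγβs
    have key : ∀ n : ℕ, ∀ s ∈ R, (n : ℝ) * γ s ≤ g R α β n s := by
      intro n
      induction n with
      | zero =>
        intro s hs
        simpa using g_nonneg hempty hcompl hunion hα hβ 0 hs
      | succ n ih =>
        intro s hs
        set ρ : Set X → ℝ := fun E => g R α β n E + γ E with hρdef
        have hρFA : IsFinAdd R ρ := by
          constructor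
          · intro t ht
            have h1 := g_nonneg hempty hcompl hunion hα hβ n ht
            have h2 := hγ.1 t ht
            simp only [hρdef]; linarith
          · intro u hu v hv hd
            have h1 := g_add hempty hcompl hunion hα hβ n hu hv hd
            have h2 := hγ.2 u hu v hv hd
            simp only [hρdef]; linarith
        have hρβ : ∀ t ∈ R, ρ t ≤ β t := by
          intro t ht
          have h1 := hγβs t ht
          have h2 := hg_le_βa n ht
          simp only [hρdef, hβs_def] at *
          linarith
        have hρα : ∀ t ∈ R, ρ t ≤ ((n + 1 : ℕ) : ℝ) * α t := by
          intro t ht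
          have h1 := g_le_nalpha hempty hcompl hunion hα hβ n ht
          have h2 := hγα t ht
          simp only [hρdef]
          push_cast
          linarith
        have := le_g hempty hcompl hunion hα hβ hρFA hρβ hρα hs
        have hih := ih s hs
        simp only [hρdef] at this
        push_cast
        push_cast at this
        linarith
    intro s hs
    by_contra hne
    have hγ0 : 0 < γ s := lt_of_le_of_ne (hγ.1 s hs) (Ne.symm hne)
    obtain ⟨n, hn⟩ := exists_nat_gt (β s / γ s)
    have h1 : (n : ℝ) * γ s ≤ β s :=
      le_trans (key n s hs) (g_le_beta hempty hcompl hunion hα hβ n hs)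
    have h2 : β s < n * γ s := by
      rw [div_lt_iff₀ hγ0] at hn
      linarith
    linarith
end
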